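/- arXiv:2105.06975 — 6 statements merged into one kernel-verified Lean document; each statement's English description precedes it below -/
import Mathlib

section
/- Let m, q be positive integers. Let D, D̂ ∈ ℝ^{m×m} and R, R̂ ∈ ℝ^{q×q} be symmetric positive definite matrices, let L, L̂ ∈ ℝ^{m×m} be invertible matrices, and let H ∈ ℝ^{q×m}. Define S = LᵀD⁻¹L + HᵀR⁻¹H, S̃ = LᵀD⁻¹L, Ŝ = L̂ᵀD⁻¹L̂, and suppose all four matrices S, S̃, Ŝ are symmetric positive definite. Suppose every eigenvalue of D̂⁻¹D lies in [λ_D, Λ_D], every eigenvalue of R̂⁻¹R lies in [λ_R, Λ_R], every eigenvalue of S̃⁻¹S lies in [λ_S, Λ_S], and every eigenvalue of (L̂ᵀL̂)⁻¹(LᵀL) lies in [λ_L, Λ_L], where all these interval endpoints are positive. Set λ_Φ = min{λ_D, λ_R}, Λ_Φ = max{Λ_D, Λ_R}, and let κ(D) denote the spectral condition number of D (the ratio of its largest to smallest eigenvalue). Let 𝒜 be the (2m+q)×(2m+q) block matrix with block rows (D, 0, L), (0, R, H), (Lᵀ, Hᵀ, 0), and let P_D = blkdiag(D̂, R̂, Ŝ).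 Then every eigenvalue λ of P_D⁻¹𝒜 is real and satisfies: λ ∈ [ (λ_Φ − √(λ_Φ² + 4Λ_ΦΛ_SΛ_Lκ(D)))/2 , (Λ_Φ − √(Λ_Φ² + 4λ_Φλ_Sλ_L/κ(D)))/2 ] ∪ [λ_Φ, Λ_Φ] ∪ [ (λ_Φ + √(λ_Φ² + 4λ_Φλ_Sλ_L/κ(D)))/2 , (Λ_Φ + √(Λ_Φ² + 4Λ_ΦΛ_SΛ_Lκ(D)))/2 ]. -/
/-!
Write an eigenvector of the pencil `(𝒜, P_D)` as `(x, p)`, with `Φ = blkdiag(D, R)`,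
`Φ̂ = blkdiag(D̂, R̂)` and `B = [L; H]`, so that `Φ x + B p = λ Φ̂ x` and `Bᵀ x = λ Ŝ p`; `λ` is
real because `𝒜` is symmetric and `P_D` positive definite. The eigenvalue hypotheses become
Loewner bounds `λ_Φ Φ̂ ≤ Φ ≤ Λ_Φ Φ̂` and, chaining congruences by `L` and `L̂` with
`dmin D⁻¹ ≤ 1 ≤ dmax D⁻¹`, `(λ_S λ_L / κ) Ŝ ≤ BᵀΦ⁻¹B = S ≤ (Λ_S Λ_L κ) Ŝ`. Put `z = Φ⁻¹ B p`,
so that `zᵀ Φ z = pᵀ S p`. Cauchy–Schwarz for `Φ` (tested on `x`, `z`) and for the pencil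
`Φ - λ Φ̂`, which is semidefinite when `λ ≤ 0` or `λ ≥ Λ_Φ`, give `λ (λ - Λ_Φ) ≤ Λ_Φ Λ_S Λ_L κ` and
`λ_Φ λ_S λ_L / κ ≤ λ (λ - λ_Φ)` outside `[λ_Φ, Λ_Φ]`; these quadratic inequalities cut out the
two outer intervals, while `xᵀ Φ x + λ pᵀ Ŝ p = λ xᵀ Φ̂ x` rules out `0 ≤ λ < λ_Φ`.
-/

open Matrix Set
open scoped MatrixOrder

namespace Matrix

lemma PosSemidef.isSymm {n : Type*} {A : Matrix n n ℝ} (hA : A.PosSemidef) : A.IsSymm :=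
  isHermitian_iff_isSymm.1 hA.isHermitian

section Forms

variable {n : Type*} [Fintype n]

lemma IsSymm.dotProduct_mulVec_comm {A : Matrix n n ℝ} (hA : A.IsSymm) (x y : n → ℝ) :
    x ⬝ᵥ A *ᵥ y = y ⬝ᵥ A *ᵥ x := by
  simpa [hA.eq] using dotProduct_transpose_mulVec A x y

lemma dotProduct_mulVec_le_of_le {A B : Matrix n n ℝ} (h : A ≤ B) (x : n → ℝ) :
    x ⬝ᵥ A *ᵥ x ≤ x ⬝ᵥ B *ᵥ x := by
  simpa [sub_mulVec] using (le_iff.1 h).dotProduct_mulVec_nonneg x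

lemma mul_dotProduct_mulVec_le_of_smul_le {A B : Matrix n n ℝ} {c : ℝ} (h : c • A ≤ B)
    (x : n → ℝ) : c * (x ⬝ᵥ A *ᵥ x) ≤ x ⬝ᵥ B *ᵥ x := by
  simpa [smul_mulVec] using dotProduct_mulVec_le_of_le h x

lemma dotProduct_mulVec_le_mul_of_le_smul {A B : Matrix n n ℝ} {c : ℝ} (h : A ≤ c • B)
    (x : n → ℝ) : x ⬝ᵥ A *ᵥ x ≤ c * (x ⬝ᵥ B *ᵥ x) := by
  simpa [smul_mulVec] using dotProduct_mulVec_le_of_le h x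

lemma sq_dotProduct_mulVec_le {A : Matrix n n ℝ} (hA : 0 ≤ A ∨ A ≤ 0) (x y : n → ℝ) :
    (x ⬝ᵥ A *ᵥ y) ^ 2 ≤ (x ⬝ᵥ A *ᵥ x) * (y ⬝ᵥ A *ᵥ y) := by
  classical
  have key {A : Matrix n n ℝ} (hA : 0 ≤ A) :
      (x ⬝ᵥ A *ᵥ y) ^ 2 ≤ (x ⬝ᵥ A *ᵥ x) * (y ⬝ᵥ A *ᵥ y) := by
    simpa [toBilin'_apply'] using LinearMap.BilinForm.apply_sq_le_of_symm (toBilin' A)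
      (fun z => by simpa [toBilin'_apply'] using hA.posSemidef.dotProduct_mulVec_nonneg z)
      (LinearMap.BilinForm.isSymm_iff.1 (isSymm_toBilin'_iff_isSymm.2 hA.posSemidef.isSymm)) x y
  rcases hA with hA | hA
  · exact key hA
  · simpa [neg_mulVec] using key (neg_nonneg.2 hA)

lemma transpose_mul_mul_le_of_le {A B : Matrix n n ℝ} (h : A ≤ B) (M : Matrix n n ℝ) :
    Mᵀ * A * M ≤ Mᵀ * B * M := by
  simpa [star_eq_conjTranspose] using star_left_conjugate_le_conjugate h M

lemma PosDef.pos_of_mulVec_eq_smul {A : Matrix n n ℝ} (hA : A.PosDef) {μ : ℝ} {v : n → ℝ}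
    (hv : v ≠ 0) (h : A *ᵥ v = μ • v) : 0 < μ := by
  have hvAv := hA.dotProduct_mulVec_pos hv
  rw [star_trivial, h, dotProduct_smul, smul_eq_mul] at hvAv
  exact (mul_pos_iff_of_pos_right (by simpa using dotProduct_star_self_pos_iff.2 hv)).1 hvAv

theorem IsSymm.exists_eigenvector_of_map_ofReal {A P : Matrix n n ℝ} (hA : A.IsSymm)
    (hP : P.PosDef) {lam : ℂ} {v : n → ℂ} (hv : v ≠ 0)
    (h : A.map (fun x : ℝ => (x : ℂ)) *ᵥ v = lam • (P.map (fun x : ℝ => (x : ℂ)) *ᵥ v)) :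
    lam.im = 0 ∧ ∃ w ≠ 0, A *ᵥ w = lam.re • (P *ᵥ w) := by
  set a : n → ℝ := fun i => (v i).re
  set b : n → ℝ := fun i => (v i).im
  have hre (M : Matrix n n ℝ) (i : n) :
      ((M.map (fun x : ℝ => (x : ℂ)) *ᵥ v) i).re = (M *ᵥ a) i := by
    simp [mulVec, dotProduct, Complex.re_sum, a]
  have him (M : Matrix n n ℝ) (i : n) :
      ((M.map (fun x : ℝ => (x : ℂ)) *ᵥ v) i).im = (M *ᵥ b) i := by
    simp [mulVec, dotProduct, Complex.im_sum, b]
  have ha : A *ᵥ a = lam.re • (P *ᵥ a) - lam.im • (P *ᵥ b) := by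
    ext i
    simpa [hre, him, Complex.mul_re] using congrArg Complex.re (congrFun h i)
  have hb : A *ᵥ b = lam.im • (P *ᵥ a) + lam.re • (P *ᵥ b) := by
    ext i
    simpa [hre, him, Complex.mul_im, add_comm] using congrArg Complex.im (congrFun h i)
  have hab : a ≠ 0 ∨ b ≠ 0 := by
    by_contra! h0
    exact hv (funext fun i => Complex.ext (congrFun h0.1 i) (congrFun h0.2 i))
  have hpos : 0 < a ⬝ᵥ P *ᵥ a + b ⬝ᵥ P *ᵥ b := by
    have hPa : 0 ≤ a ⬝ᵥ P *ᵥ a := by simpa using hP.posSemidef.dotProduct_mulVec_nonneg a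
    have hPb : 0 ≤ b ⬝ᵥ P *ᵥ b := by simpa using hP.posSemidef.dotProduct_mulVec_nonneg b
    rcases hab with h | h
    · linarith [show 0 < a ⬝ᵥ P *ᵥ a by simpa using hP.dotProduct_mulVec_pos h]
    · linarith [show 0 < b ⬝ᵥ P *ᵥ b by simpa using hP.dotProduct_mulVec_pos h]
  have him0 : lam.im = 0 := by
    have hsymm := hA.dotProduct_mulVec_comm a b
    rw [ha, hb] at hsymm
    simp only [dotProduct_add, dotProduct_sub, dotProduct_smul, smul_eq_mul] at hsymm
    rw [hP.posSemidef.isSymm.dotProduct_mulVec_comm b a] at hsymm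
    have : lam.im * (a ⬝ᵥ P *ᵥ a + b ⬝ᵥ P *ᵥ b) = 0 := by linear_combination hsymm
    exact (mul_eq_zero.1 this).resolve_right hpos.ne'
  simp only [him0, zero_smul, sub_zero, zero_add] at ha hb
  exact ⟨him0, hab.elim (fun h => ⟨a, h, ha⟩) (fun h => ⟨b, h, hb⟩)⟩

end Forms

section Spectral

variable {n : Type*} [Fintype n] [DecidableEq n]

lemma exists_mulVec_eq_smul_of_mem_spectrum {K : Type*} [Field K] {M : Matrix n n K} {μ : K}
    (h : μ ∈ spectrum K M) : ∃ v ≠ 0, M *ᵥ v = μ • v := by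
  rw [← spectrum_toLin', ← Module.End.hasEigenvalue_iff_mem_spectrum] at h
  obtain ⟨v, hv⟩ := h.exists_hasEigenvector
  exact ⟨v, hv.2, by simpa using hv.apply_eq_smul⟩

theorem smul_le_and_le_smul_of_eigenvalues_mem_Icc {A B : Matrix n n ℝ} (hA : A.IsHermitian)
    (hB : B.PosDef) {l L : ℝ}
    (h : ∀ (μ : ℝ) (v : n → ℝ), v ≠ 0 → (B⁻¹ * A) *ᵥ v = μ • v → μ ∈ Icc l L) :
    l • B ≤ A ∧ A ≤ L • B := by
  set R := CFC.sqrt B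
  have hR : IsSelfAdjoint R := (CFC.sqrt_nonneg B).isSelfAdjoint
  have hRR : R * R = B := CFC.sqrt_mul_sqrt_self B hB.posSemidef.nonneg
  have hRdet : IsUnit R.det :=
    (isUnit_iff_isUnit_det R).1 ((CFC.isUnit_sqrt_iff B hB.posSemidef.nonneg).2 hB.isUnit)
  -- conjugating by `R = √B` turns the pencil `(A, B)` into `C`, which is similar to `B⁻¹ * A`
  set C := R⁻¹ * A * R⁻¹
  have hRinv : IsSelfAdjoint R⁻¹ := by
    rw [IsSelfAdjoint, star_eq_conjTranspose, conjTranspose_nonsing_inv, ← star_eq_conjTranspose,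
      hR.star_eq]
  have hC : IsSelfAdjoint C := by simpa [hRinv.star_eq] using hA.isSelfAdjoint.conjugate R⁻¹
  have hA_eq : A = R * C * R := by
    simp only [C, ← mul_assoc, mul_nonsing_inv _ hRdet, one_mul]
    rw [mul_assoc, nonsing_inv_mul _ hRdet, mul_one]
  have hspec : ∀ μ ∈ spectrum ℝ C, μ ∈ Icc l L := by
    intro μ hμ
    obtain ⟨u, hu, hCu⟩ := exists_mulVec_eq_smul_of_mem_spectrum hμ
    have hBA : B⁻¹ * A = R⁻¹ * C * R := by
      rw [← hRR, mul_inv_rev, hA_eq]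
      simp only [mul_assoc, nonsing_inv_mul_cancel_left _ _ hRdet]
    refine h μ (R⁻¹ *ᵥ u) ?_ ?_
    · intro h0
      apply hu
      simpa [mulVec_mulVec, mul_nonsing_inv _ hRdet] using congrArg (R *ᵥ ·) h0
    · have hRu : R *ᵥ (R⁻¹ *ᵥ u) = u := by rw [mulVec_mulVec, mul_nonsing_inv _ hRdet, one_mulVec]
      rw [hBA, ← mulVec_mulVec, ← mulVec_mulVec, hRu, hCu, mulVec_smul]
  have hconj (r : ℝ) : r • B = R * algebraMap ℝ _ r * R := by
    rw [Algebra.algebraMap_eq_smul_one, mul_smul_comm, mul_one, smul_mul_assoc, hRR]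
  constructor
  · rw [hconj, hA_eq]
    exact hR.conjugate_le_conjugate
      ((algebraMap_le_iff_le_spectrum hC).2 fun μ hμ => (hspec μ hμ).1)
  · rw [hconj, hA_eq]
    exact hR.conjugate_le_conjugate
      ((le_algebraMap_iff_spectrum_le hC).2 fun μ hμ => (hspec μ hμ).2)

lemma posDef_transpose_mul_self {L : Matrix n n ℝ} (hL : IsUnit L.det) : (Lᵀ * L).PosDef := by
  simpa using PosDef.conjTranspose_mul_self L
    (mulVec_injective_iff_isUnit.2 ((isUnit_iff_isUnit_det L).2 hL))

lemma PosDef.smul_inv_le_one_and_one_le_smul_inv {D : Matrix n n ℝ} (hD : D.PosDef) {dmin dmax : ℝ}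
    (hmin : dmin ∈ lowerBounds {μ : ℝ | ∃ v : n → ℝ, v ≠ 0 ∧ D *ᵥ v = μ • v})
    (hmax : dmax ∈ upperBounds {μ : ℝ | ∃ v : n → ℝ, v ≠ 0 ∧ D *ᵥ v = μ • v}) :
    dmin • D⁻¹ ≤ 1 ∧ 1 ≤ dmax • D⁻¹ :=
  smul_le_and_le_smul_of_eigenvalues_mem_Icc isHermitian_one hD.inv fun μ u hu h => by
    rw [nonsing_inv_nonsing_inv _ ((isUnit_iff_isUnit_det D).1 hD.isUnit), Matrix.mul_one] at h
    exact ⟨hmin ⟨u, hu, h⟩, hmax ⟨u, hu, h⟩⟩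

theorem smul_le_of_congruence_bounds {E S L Lh : Matrix n n ℝ} {dmin dmax lS lL : ℝ}
    (hlS : 0 ≤ lS) (hlL : 0 ≤ lL) (hdmax : 0 < dmax) (hEmin : dmin • E ≤ 1)
    (hEmax : 1 ≤ dmax • E) (hS : lS • (Lᵀ * E * L) ≤ S) (hL : lL • (Lhᵀ * Lh) ≤ Lᵀ * L) :
    (lS * lL * dmin / dmax) • (Lhᵀ * E * Lh) ≤ S :=
  calc (lS * lL * dmin / dmax) • (Lhᵀ * E * Lh)
      = (lS * lL / dmax) • (Lhᵀ * (dmin • E) * Lh) := by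
        rw [mul_smul_comm, smul_mul_assoc, smul_smul]; congr 1; ring
    _ ≤ (lS * lL / dmax) • (Lhᵀ * 1 * Lh) :=
        smul_le_smul_of_nonneg_left (transpose_mul_mul_le_of_le hEmin Lh)
          (div_nonneg (mul_nonneg hlS hlL) hdmax.le)
    _ = (lS / dmax) • (lL • (Lhᵀ * Lh)) := by
        rw [Matrix.mul_one, smul_smul]; congr 1; ring
    _ ≤ (lS / dmax) • (Lᵀ * 1 * L) := by
        rw [Matrix.mul_one]; exact smul_le_smul_of_nonneg_left hL (div_nonneg hlS hdmax.le)
    _ ≤ (lS / dmax) • (Lᵀ * (dmax • E) * L) :=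
        smul_le_smul_of_nonneg_left (transpose_mul_mul_le_of_le hEmax L) (div_nonneg hlS hdmax.le)
    _ = lS • (Lᵀ * E * L) := by
        rw [mul_smul_comm, smul_mul_assoc, smul_smul, div_mul_cancel₀ _ hdmax.ne']
    _ ≤ S := hS

theorem le_smul_of_congruence_bounds {E S L Lh : Matrix n n ℝ} {dmin dmax LS LL : ℝ}
    (hLS : 0 ≤ LS) (hLL : 0 ≤ LL) (hdmin : 0 < dmin) (hEmin : dmin • E ≤ 1)
    (hEmax : 1 ≤ dmax • E) (hS : S ≤ LS • (Lᵀ * E * L)) (hL : Lᵀ * L ≤ LL • (Lhᵀ * Lh)) :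
    S ≤ (LS * LL * dmax / dmin) • (Lhᵀ * E * Lh) :=
  calc S ≤ LS • (Lᵀ * E * L) := hS
    _ = (LS / dmin) • (Lᵀ * (dmin • E) * L) := by
        rw [mul_smul_comm, smul_mul_assoc, smul_smul, div_mul_cancel₀ _ hdmin.ne']
    _ ≤ (LS / dmin) • (Lᵀ * 1 * L) :=
        smul_le_smul_of_nonneg_left (transpose_mul_mul_le_of_le hEmin L) (div_nonneg hLS hdmin.le)
    _ ≤ (LS / dmin) • (LL • (Lhᵀ * Lh)) := by
        rw [Matrix.mul_one]; exact smul_le_smul_of_nonneg_left hL (div_nonneg hLS hdmin.le)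
    _ = (LS * LL / dmin) • (Lhᵀ * 1 * Lh) := by
        rw [Matrix.mul_one, smul_smul]; congr 1; ring
    _ ≤ (LS * LL / dmin) • (Lhᵀ * (dmax • E) * Lh) :=
        smul_le_smul_of_nonneg_left (transpose_mul_mul_le_of_le hEmax Lh)
          (div_nonneg (mul_nonneg hLS hLL) hdmin.le)
    _ = (LS * LL * dmax / dmin) • (Lhᵀ * E * Lh) := by
        rw [mul_smul_comm, smul_mul_assoc, smul_smul]; congr 1; ring

end Spectral

end Matrix

def saddlePointIntervals (l L σ τ : ℝ) : Set ℝ :=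
  Icc ((l - √(l ^ 2 + 4 * L * τ)) / 2) ((L - √(L ^ 2 + 4 * l * σ)) / 2) ∪ Icc l L ∪
    Icc ((l + √(l ^ 2 + 4 * l * σ)) / 2) ((L + √(L ^ 2 + 4 * L * τ)) / 2)

section Quadratic

variable {l L σ τ t : ℝ}

lemma mem_Icc_of_neg_of_quadratic (hl : 0 < l) (hlL : l ≤ L) (ht : t < 0)
    (hσ : l * σ ≤ t * (t - l)) (hτ : t * (t - L) ≤ L * τ) :
    t ∈ Icc ((l - √(l ^ 2 + 4 * L * τ)) / 2) ((L - √(L ^ 2 + 4 * l * σ)) / 2) := by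
  have htL : t * L ≤ t * l := mul_le_mul_of_nonpos_left hlL ht.le
  constructor
  · have := Real.abs_le_sqrt (x := l - 2 * t) (y := l ^ 2 + 4 * L * τ) (by nlinarith)
    linarith [le_abs_self (l - 2 * t)]
  · have := Real.sqrt_le_sqrt (show L ^ 2 + 4 * l * σ ≤ (L - 2 * t) ^ 2 by nlinarith)
    rw [Real.sqrt_sq (by linarith)] at this
    linarith

lemma mem_Icc_of_lt_of_quadratic (hl : 0 < l) (hlL : l ≤ L) (ht : L < t)
    (hσ : l * σ ≤ t * (t - l)) (hτ : t * (t - L) ≤ L * τ) :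
    t ∈ Icc ((l + √(l ^ 2 + 4 * l * σ)) / 2) ((L + √(L ^ 2 + 4 * L * τ)) / 2) := by
  constructor
  · have := Real.sqrt_le_sqrt (show l ^ 2 + 4 * l * σ ≤ (2 * t - l) ^ 2 by nlinarith)
    rw [Real.sqrt_sq (by linarith)] at this
    linarith
  · have := Real.abs_le_sqrt (x := 2 * t - L) (y := L ^ 2 + 4 * L * τ) (by nlinarith)
    linarith [le_abs_self (2 * t - L)]

-- For an eigenvector `(x, p)` and `z = Φ⁻¹ B p`: `a = xᵀ Φ x`, `b = xᵀ Φ̂ x`, `s = pᵀ Ŝ p`,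
-- `g = zᵀ Φ z = pᵀ S p` and `ĝ = zᵀ Φ̂ z`.
theorem mem_saddlePointIntervals_of_scalar_bounds {a b s g ĝ : ℝ} (hl : 0 < l) (ha : 0 < a)
    (hb : 0 < b) (hs : 0 ≤ s) (hg : 0 ≤ g) (hlb : l * b ≤ a) (hLb : a ≤ L * b)
    (hE : a + t * s = t * b)
    (hCS : (t * s) ^ 2 ≤ a * g) (hCS' : t ≤ 0 ∨ L ≤ t → g ^ 2 ≤ (t * ĝ - g) * (t * s))
    (hĝ : l * ĝ ≤ g) (hσ : σ * s ≤ g) (hτ : g ≤ τ * s) :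
    t ∈ saddlePointIntervals l L σ τ := by
  have hlL : l ≤ L := le_of_mul_le_mul_right (hlb.trans hLb) hb
  by_cases hmid : t ∈ Icc l L
  · exact Or.inl (Or.inr hmid)
  have hout : t < 0 ∨ L < t := by
    by_contra! h
    exact hmid ⟨le_of_mul_le_mul_right (by nlinarith) hb, h.2⟩
  -- with `s = 0` the eigenvalue `t = a / b` would lie in `[l, L]`
  have hs0 : 0 < s := by
    refine hs.lt_of_ne' fun h0 => ?_
    rw [h0, mul_zero, add_zero] at hE
    rcases hout with ht | ht <;> nlinarith
  have htts : 0 ≤ t * (t * s) := by nlinarith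
  have hτ' : t * (t - L) ≤ L * τ := by
    have : (t - L) * (t * s) * a ≤ L * g * a := by
      have hE' := congrArg (· * (L * (t * s))) hE
      nlinarith [mul_nonneg htts (sub_nonneg.2 hLb),
        mul_le_mul_of_nonneg_left hCS (hl.le.trans hlL)]
    have : (t - L) * (t * s) ≤ L * g := le_of_mul_le_mul_right this ha
    exact le_of_mul_le_mul_right (by nlinarith) hs0
  have hσ' : l * σ ≤ t * (t - l) := by
    have hCS'' := hCS' (hout.imp le_of_lt le_of_lt)
    rcases hg.lt_or_eq with hg | hg
    · have : l * g * g ≤ (t - l) * (t * s) * g := by nlinarith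
      have : l * g ≤ (t - l) * (t * s) := le_of_mul_le_mul_right this hg
      exact le_of_mul_le_mul_right (by nlinarith) hs0
    · have : σ ≤ 0 := by nlinarith
      rcases hout with ht | ht <;> nlinarith
  rcases hout with ht | ht
  · exact Or.inl (Or.inl (mem_Icc_of_neg_of_quadratic hl hlL ht hσ' hτ'))
  · exact Or.inr (mem_Icc_of_lt_of_quadratic hl hlL ht hσ' hτ')

end Quadratic

namespace Matrix

section SaddlePoint

variable {n k : Type*} [Fintype n] [Fintype k] [DecidableEq n]

lemma sub_smul_nonneg_or_nonpos {Φ Φh : Matrix n n ℝ} (hΦ : 0 ≤ Φ) (hΦh : 0 ≤ Φh) {L t : ℝ}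
    (hΦL : Φ ≤ L • Φh) (ht : t ≤ 0 ∨ L ≤ t) : 0 ≤ Φ - t • Φh ∨ Φ - t • Φh ≤ 0 := by
  rcases ht with ht | ht
  · left
    rw [sub_eq_add_neg, ← neg_smul]
    exact add_nonneg hΦ (smul_nonneg (neg_nonneg.2 ht) hΦh)
  · right
    calc Φ - t • Φh ≤ L • Φh - t • Φh := sub_le_sub_right hΦL _
      _ = (L - t) • Φh := (sub_smul _ _ _).symm
      _ ≤ 0 := smul_nonpos_of_nonpos_of_nonneg (by linarith) hΦh

theorem mem_saddlePointIntervals_of_blocks {Φ Φh : Matrix n n ℝ} {B : Matrix n k ℝ}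
    {Sh : Matrix k k ℝ} (hΦ : Φ.PosDef) (hΦh : Φh.PosDef) (hSh : Sh.PosDef)
    (hB : Function.Injective B.mulVec) {l L σ τ : ℝ} (hl : 0 < l) (hΦl : l • Φh ≤ Φ)
    (hΦL : Φ ≤ L • Φh) (hSσ : σ • Sh ≤ Bᵀ * Φ⁻¹ * B) (hSτ : Bᵀ * Φ⁻¹ * B ≤ τ • Sh)
    {t : ℝ} {x : n → ℝ} {p : k → ℝ} (hxp : x ≠ 0 ∨ p ≠ 0)
    (h₁ : Φ *ᵥ x + B *ᵥ p = t • (Φh *ᵥ x)) (h₂ : Bᵀ *ᵥ x = t • (Sh *ᵥ p)) :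
    t ∈ saddlePointIntervals l L σ τ := by
  have hx : x ≠ 0 := by
    rintro rfl
    exact hxp.elim (fun h => h rfl) fun hp => hp (hB (by simpa using h₁))
  set y := B *ᵥ p
  set z := Φ⁻¹ *ᵥ y
  have hΦz : Φ *ᵥ z = y := by
    rw [mulVec_mulVec, mul_nonsing_inv _ ((isUnit_iff_isUnit_det _).1 hΦ.isUnit), one_mulVec]
  have hg : z ⬝ᵥ Φ *ᵥ z = p ⬝ᵥ (Bᵀ * Φ⁻¹ * B) *ᵥ p := by
    rw [hΦz, ← mulVec_mulVec, ← mulVec_mulVec, dotProduct_transpose_mulVec]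
  have hq : x ⬝ᵥ y = t * (p ⬝ᵥ Sh *ᵥ p) := by
    rw [← dotProduct_transpose_mulVec, h₂, dotProduct_smul, smul_eq_mul,
      hSh.posSemidef.isSymm.dotProduct_mulVec_comm]
  have hE : x ⬝ᵥ Φ *ᵥ x + t * (p ⬝ᵥ Sh *ᵥ p) = t * (x ⬝ᵥ Φh *ᵥ x) := by
    simpa [dotProduct_add, hq] using congrArg (x ⬝ᵥ ·) h₁
  have hCS : (t * (p ⬝ᵥ Sh *ᵥ p)) ^ 2 ≤ x ⬝ᵥ Φ *ᵥ x * (z ⬝ᵥ Φ *ᵥ z) := by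
    simpa only [hΦz, hq] using sq_dotProduct_mulVec_le (Or.inl hΦ.posSemidef.nonneg) x z
  have hNx : (Φ - t • Φh) *ᵥ x = -y := by
    rw [sub_mulVec, smul_mulVec, ← h₁]
    abel
  have hCS' (ht : t ≤ 0 ∨ L ≤ t) : (z ⬝ᵥ Φ *ᵥ z) ^ 2 ≤
      (t * (z ⬝ᵥ Φh *ᵥ z) - z ⬝ᵥ Φ *ᵥ z) * (t * (p ⬝ᵥ Sh *ᵥ p)) := by
    have := sq_dotProduct_mulVec_le
      (sub_smul_nonneg_or_nonpos hΦ.posSemidef.nonneg hΦh.posSemidef.nonneg hΦL ht) z x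
    rw [hNx, dotProduct_neg, dotProduct_neg, hq, ← hΦz, sub_mulVec, smul_mulVec, dotProduct_sub,
      dotProduct_smul, smul_eq_mul] at this
    nlinarith [this]
  refine mem_saddlePointIntervals_of_scalar_bounds hl
    (by simpa using hΦ.dotProduct_mulVec_pos hx) (by simpa using hΦh.dotProduct_mulVec_pos hx)
    (by simpa using hSh.posSemidef.dotProduct_mulVec_nonneg p)
    (by simpa using hΦ.posSemidef.dotProduct_mulVec_nonneg z)
    (mul_dotProduct_mulVec_le_of_smul_le hΦl x) (dotProduct_mulVec_le_mul_of_le_smul hΦL x)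
    hE hCS hCS' (mul_dotProduct_mulVec_le_of_smul_le hΦl z)
    (hg ▸ mul_dotProduct_mulVec_le_of_smul_le hSσ p)
    (hg ▸ dotProduct_mulVec_le_mul_of_le_smul hSτ p)

theorem mem_saddlePointIntervals_of_eigenvector {Φ Φh : Matrix n n ℝ} {B : Matrix n k ℝ}
    {Sh : Matrix k k ℝ} (hΦ : Φ.PosDef) (hΦh : Φh.PosDef) (hSh : Sh.PosDef)
    (hB : Function.Injective B.mulVec) {l L σ τ : ℝ} (hl : 0 < l) (hΦl : l • Φh ≤ Φ)
    (hΦL : Φ ≤ L • Φh) (hSσ : σ • Sh ≤ Bᵀ * Φ⁻¹ * B) (hSτ : Bᵀ * Φ⁻¹ * B ≤ τ • Sh)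
    {t : ℝ} {w : n ⊕ k → ℝ} (hw : w ≠ 0)
    (h : fromBlocks Φ B Bᵀ 0 *ᵥ w = t • (fromBlocks Φh 0 0 Sh *ᵥ w)) :
    t ∈ saddlePointIntervals l L σ τ := by
  rw [← Sum.elim_comp_inl_inr w, fromBlocks_mulVec, fromBlocks_mulVec] at h
  refine mem_saddlePointIntervals_of_blocks hΦ hΦh hSh hB hl hΦl hΦL hSσ hSτ ?_
    (funext fun i => by simpa using congrFun h (Sum.inl i))
    (funext fun i => by simpa using congrFun h (Sum.inr i))
  by_contra! h0
  exact hw (by rw [← Sum.elim_comp_inl_inr w, h0.1, h0.2]; exact Sum.elim_zero_zero)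

end SaddlePoint

section Blocks

variable {m n : Type*} [Fintype m] [Fintype n]

lemma exists_eigenvector_of_fromBlocks_zero {A : Matrix m m ℝ} {D : Matrix n n ℝ}
    {μ : ℝ} {v : m ⊕ n → ℝ} (hv : v ≠ 0) (h : fromBlocks A 0 0 D *ᵥ v = μ • v) :
    (∃ u ≠ 0, A *ᵥ u = μ • u) ∨ ∃ u ≠ 0, D *ᵥ u = μ • u := by
  rw [← Sum.elim_comp_inl_inr v, fromBlocks_mulVec] at h
  by_cases h0 : v ∘ Sum.inl = 0
  · refine Or.inr ⟨v ∘ Sum.inr, fun h1 => hv ?_,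
      funext fun i => by simpa using congrFun h (Sum.inr i)⟩
    rw [← Sum.elim_comp_inl_inr v, h0, h1]
    exact Sum.elim_zero_zero
  · exact Or.inl ⟨v ∘ Sum.inl, h0, funext fun i => by simpa using congrFun h (Sum.inl i)⟩

variable [DecidableEq m] [DecidableEq n]

theorem PosDef.fromBlocks_zero {A : Matrix m m ℝ} {D : Matrix n n ℝ} (hA : A.PosDef)
    (hD : D.PosDef) : (fromBlocks A 0 0 D).PosDef := by
  have := hA.isUnit.invertible
  have hpsd : (fromBlocks A 0 0 D).PosSemidef := by
    simpa using (PosDef.fromBlocks₁₁ (0 : Matrix m n ℝ) D hA).2 (by simpa using hD.posSemidef)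
  refine hpsd.posDef_iff_isUnit.2 ?_
  rw [isUnit_iff_isUnit_det, det_fromBlocks_zero₁₂]
  exact ((isUnit_iff_isUnit_det _).1 hA.isUnit).mul ((isUnit_iff_isUnit_det _).1 hD.isUnit)

lemma inv_fromBlocks_zero {A : Matrix m m ℝ} {D : Matrix n n ℝ} (hA : IsUnit A) (hD : IsUnit D) :
    (fromBlocks A 0 0 D)⁻¹ = fromBlocks A⁻¹ 0 0 D⁻¹ := by
  simpa using inv_fromBlocks_zero₁₂_of_isUnit_iff A 0 D (iff_of_true hA hD)

theorem fromBlocks_smul_le_and_le_smul {D Dh : Matrix m m ℝ} {R Rh : Matrix n n ℝ}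
    (hD : D.IsHermitian) (hR : R.IsHermitian) (hDh : Dh.PosDef) (hRh : Rh.PosDef) {l L : ℝ}
    (hDint : ∀ (μ : ℝ) (v : m → ℝ), v ≠ 0 → (Dh⁻¹ * D) *ᵥ v = μ • v → μ ∈ Icc l L)
    (hRint : ∀ (μ : ℝ) (v : n → ℝ), v ≠ 0 → (Rh⁻¹ * R) *ᵥ v = μ • v → μ ∈ Icc l L) :
    l • fromBlocks Dh 0 0 Rh ≤ fromBlocks D 0 0 R ∧
      fromBlocks D 0 0 R ≤ L • fromBlocks Dh 0 0 Rh := by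
  refine smul_le_and_le_smul_of_eigenvalues_mem_Icc (hD.fromBlocks (by simp) hR)
    (hDh.fromBlocks_zero hRh) fun μ v hv h => ?_
  rw [inv_fromBlocks_zero hDh.isUnit hRh.isUnit, fromBlocks_multiply] at h
  simp only [Matrix.mul_zero, Matrix.zero_mul, add_zero, zero_add] at h
  rcases exists_eigenvector_of_fromBlocks_zero hv h with ⟨u, hu, hDu⟩ | ⟨u, hu, hRu⟩
  exacts [hDint μ u hu hDu, hRint μ u hu hRu]

lemma transpose_fromRows_mul_inv_mul_fromRows {D : Matrix m m ℝ} {R : Matrix n n ℝ}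
    (hD : IsUnit D) (hR : IsUnit R) {k : Type*} (L : Matrix m k ℝ) (H : Matrix n k ℝ) :
    (fromRows L H)ᵀ * (fromBlocks D 0 0 R)⁻¹ * fromRows L H = Lᵀ * D⁻¹ * L + Hᵀ * R⁻¹ * H := by
  rw [transpose_fromRows, inv_fromBlocks_zero hD hR, fromCols_mul_fromBlocks]
  simp only [Matrix.mul_zero, add_zero, zero_add]
  rw [fromCols_mul_fromRows]

lemma fromRows_mulVec_injective {m n k : Type*} [Fintype k] {L : Matrix m k ℝ}
    (hL : Function.Injective L.mulVec) (H : Matrix n k ℝ) :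
    Function.Injective (fromRows L H).mulVec := fun p p' h => by
  rw [fromRows_mulVec, fromRows_mulVec] at h
  exact hL (congrArg (· ∘ Sum.inl) h)

end Blocks

end Matrix

theorem block_diag_preconditioner_eigenvalue_bounds_general
    (m q : ℕ)
    (D Dhat : Matrix (Fin m) (Fin m) ℝ) (R Rhat : Matrix (Fin q) (Fin q) ℝ)
    (L Lhat : Matrix (Fin m) (Fin m) ℝ) (H : Matrix (Fin q) (Fin m) ℝ)
    (hD : D.PosDef) (hDhat : Dhat.PosDef) (hR : R.PosDef) (hRhat : Rhat.PosDef)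
    (hL : IsUnit L.det) (hLhat : IsUnit Lhat.det)
    (S Stilde Shat : Matrix (Fin m) (Fin m) ℝ)
    (hSdef : S = Lᵀ * D⁻¹ * L + Hᵀ * R⁻¹ * H)
    (hStdef : Stilde = Lᵀ * D⁻¹ * L)
    (hShdef : Shat = Lhatᵀ * D⁻¹ * Lhat)
    (hS : S.PosDef) (hSt : Stilde.PosDef) (hSh : Shat.PosDef)
    (lD LD lR LR lS LS lL LL : ℝ)
    (hlD : 0 < lD) (hlR : 0 < lR)
    (hlS : 0 < lS) (hLS : 0 < LS) (hlL : 0 < lL) (hLL : 0 < LL)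
    -- every eigenvalue of D̂⁻¹D lies in [lD, LD]
    (hDint : ∀ (μ : ℝ) (v : Fin m → ℝ), v ≠ 0 → (Dhat⁻¹ * D) *ᵥ v = μ • v →
      μ ∈ Icc lD LD)
    -- every eigenvalue of R̂⁻¹R lies in [lR, LR]
    (hRint : ∀ (μ : ℝ) (v : Fin q → ℝ), v ≠ 0 → (Rhat⁻¹ * R) *ᵥ v = μ • v →
      μ ∈ Icc lR LR)
    -- every eigenvalue of S̃⁻¹S lies in [lS, LS]
    (hSint : ∀ (μ : ℝ) (v : Fin m → ℝ), v ≠ 0 → (Stilde⁻¹ * S) *ᵥ v = μ • v →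
      μ ∈ Icc lS LS)
    -- every eigenvalue of (L̂ᵀL̂)⁻¹(LᵀL) lies in [lL, LL]
    (hLint : ∀ (μ : ℝ) (v : Fin m → ℝ), v ≠ 0 →
      ((Lhatᵀ * Lhat)⁻¹ * (Lᵀ * L)) *ᵥ v = μ • v → μ ∈ Icc lL LL)
    -- extreme eigenvalues of D and its spectral condition number
    (dmin dmax : ℝ)
    (hdmin : IsLeast {μ : ℝ | ∃ v : Fin m → ℝ, v ≠ 0 ∧ D *ᵥ v = μ • v} dmin)
    (hdmax : IsGreatest {μ : ℝ | ∃ v : Fin m → ℝ, v ≠ 0 ∧ D *ᵥ v = μ • v} dmax)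
    (lPhi LPhi κD : ℝ)
    (hlPhi : lPhi = min lD lR) (hLPhi : LPhi = max LD LR) (hκD : κD = dmax / dmin) :
    ∀ (lam : ℂ) (v : ((Fin m ⊕ Fin q) ⊕ Fin m) → ℂ), v ≠ 0 →
      ((Matrix.fromBlocks (Matrix.fromBlocks D 0 0 R) (Matrix.fromRows L H)
          (Matrix.fromCols Lᵀ Hᵀ) 0).map (fun x : ℝ => (x : ℂ))) *ᵥ v
        = lam • (((Matrix.fromBlocks (Matrix.fromBlocks Dhat 0 0 Rhat) 0 0 Shat).map
            (fun x : ℝ => (x : ℂ))) *ᵥ v) →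
      lam.im = 0 ∧
        lam.re ∈
          Icc ((lPhi - Real.sqrt (lPhi ^ 2 + 4 * LPhi * LS * LL * κD)) / 2)
              ((LPhi - Real.sqrt (LPhi ^ 2 + 4 * lPhi * lS * lL / κD)) / 2)
            ∪ Icc lPhi LPhi
            ∪ Icc ((lPhi + Real.sqrt (lPhi ^ 2 + 4 * lPhi * lS * lL / κD)) / 2)
                ((LPhi + Real.sqrt (LPhi ^ 2 + 4 * LPhi * LS * LL * κD)) / 2) := by
  subst hSdef hStdef hShdef hlPhi hLPhi hκD
  intro lam v hv heig
  rw [← transpose_fromRows] at heig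
  have hΦ := hD.fromBlocks_zero hR
  have hΦh := hDhat.fromBlocks_zero hRhat
  obtain ⟨him, w, hw, hweig⟩ := (hΦ.posSemidef.isSymm.fromBlocks rfl isSymm_zero
    ).exists_eigenvector_of_map_ofReal (hΦh.fromBlocks_zero hSh) hv heig
  refine ⟨him, ?_⟩
  obtain ⟨hΦl, hΦL⟩ := fromBlocks_smul_le_and_le_smul hD.1 hR.1 hDhat hRhat
    (fun μ u hu h => Icc_subset_Icc (min_le_left _ _) (le_max_left _ _) (hDint μ u hu h))
    (fun μ u hu h => Icc_subset_Icc (min_le_right _ _) (le_max_right _ _) (hRint μ u hu h))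
  obtain ⟨hSl, hSu⟩ := smul_le_and_le_smul_of_eigenvalues_mem_Icc hS.1 hSt hSint
  obtain ⟨hLl, hLu⟩ := smul_le_and_le_smul_of_eigenvalues_mem_Icc
    (posDef_transpose_mul_self hL).1 (posDef_transpose_mul_self hLhat) hLint
  obtain ⟨hDl, hDu⟩ := hD.smul_inv_le_one_and_one_le_smul_inv hdmin.2 hdmax.2
  have hdmin0 : 0 < dmin := by
    obtain ⟨u, hu, hDu⟩ := hdmin.1
    exact hD.pos_of_mulVec_eq_smul hu hDu
  have hdmax0 : 0 < dmax := hdmin0.trans_le (hdmin.2 hdmax.1)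
  have hSchur := transpose_fromRows_mul_inv_mul_fromRows hD.isUnit hR.isUnit L H
  rw [show 4 * max LD LR * LS * LL * (dmax / dmin) = 4 * max LD LR * (LS * LL * dmax / dmin) by
      ring,
    show 4 * min lD lR * lS * lL / (dmax / dmin) = 4 * min lD lR * (lS * lL * dmin / dmax) by
      rw [div_div_eq_mul_div]; ring]
  exact mem_saddlePointIntervals_of_eigenvector hΦ hΦh hSh
    (fromRows_mulVec_injective (mulVec_injective_iff_isUnit.2 ((isUnit_iff_isUnit_det L).2 hL)) H)
    (lt_min hlD hlR) hΦl hΦL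
    (hSchur ▸ smul_le_of_congruence_bounds hlS.le hlL.le hdmax0 hDl hDu hSl hLl)
    (hSchur ▸ le_smul_of_congruence_bounds hLS.le hLL.le hdmin0 hDl hDu hSu hLu) hw hweig

/-- Theorem 3.1: eigenvalue bounds for the block diagonally preconditioned
saddle point system arising in weak-constraint 4D-Var. -/
theorem block_diag_preconditioner_eigenvalue_bounds
    (m q : ℕ) (hm : 0 < m) (hq : 0 < q)
    (D Dhat : Matrix (Fin m) (Fin m) ℝ) (R Rhat : Matrix (Fin q) (Fin q) ℝ)
    (L Lhat : Matrix (Fin m) (Fin m) ℝ) (H : Matrix (Fin q) (Fin m) ℝ)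
    (hD : D.PosDef) (hDhat : Dhat.PosDef) (hR : R.PosDef) (hRhat : Rhat.PosDef)
    (hL : IsUnit L.det) (hLhat : IsUnit Lhat.det)
    (S Stilde Shat : Matrix (Fin m) (Fin m) ℝ)
    (hSdef : S = Lᵀ * D⁻¹ * L + Hᵀ * R⁻¹ * H)
    (hStdef : Stilde = Lᵀ * D⁻¹ * L)
    (hShdef : Shat = Lhatᵀ * D⁻¹ * Lhat)
    (hS : S.PosDef) (hSt : Stilde.PosDef) (hSh : Shat.PosDef)
    (lD LD lR LR lS LS lL LL : ℝ)
    (hlD : 0 < lD) (hLD : 0 < LD) (hlR : 0 < lR) (hLR : 0 < LR)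
    (hlS : 0 < lS) (hLS : 0 < LS) (hlL : 0 < lL) (hLL : 0 < LL)
    -- every eigenvalue of D̂⁻¹D lies in [lD, LD]
    (hDint : ∀ (μ : ℝ) (v : Fin m → ℝ), v ≠ 0 → (Dhat⁻¹ * D) *ᵥ v = μ • v →
      μ ∈ Icc lD LD)
    -- every eigenvalue of R̂⁻¹R lies in [lR, LR]
    (hRint : ∀ (μ : ℝ) (v : Fin q → ℝ), v ≠ 0 → (Rhat⁻¹ * R) *ᵥ v = μ • v →
      μ ∈ Icc lR LR)
    -- every eigenvalue of S̃⁻¹S lies in [lS, LS]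
    (hSint : ∀ (μ : ℝ) (v : Fin m → ℝ), v ≠ 0 → (Stilde⁻¹ * S) *ᵥ v = μ • v →
      μ ∈ Icc lS LS)
    -- every eigenvalue of (L̂ᵀL̂)⁻¹(LᵀL) lies in [lL, LL]
    (hLint : ∀ (μ : ℝ) (v : Fin m → ℝ), v ≠ 0 →
      ((Lhatᵀ * Lhat)⁻¹ * (Lᵀ * L)) *ᵥ v = μ • v → μ ∈ Icc lL LL)
    -- extreme eigenvalues of D and its spectral condition number
    (dmin dmax : ℝ)
    (hdmin : IsLeast {μ : ℝ | ∃ v : Fin m → ℝ, v ≠ 0 ∧ D *ᵥ v = μ • v} dmin)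
    (hdmax : IsGreatest {μ : ℝ | ∃ v : Fin m → ℝ, v ≠ 0 ∧ D *ᵥ v = μ • v} dmax)
    (lPhi LPhi κD : ℝ)
    (hlPhi : lPhi = min lD lR) (hLPhi : LPhi = max LD LR) (hκD : κD = dmax / dmin) :
    ∀ (lam : ℂ) (v : ((Fin m ⊕ Fin q) ⊕ Fin m) → ℂ), v ≠ 0 →
      ((Matrix.fromBlocks (Matrix.fromBlocks D 0 0 R) (Matrix.fromRows L H)
          (Matrix.fromCols Lᵀ Hᵀ) 0).map (fun x : ℝ => (x : ℂ))) *ᵥ v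
        = lam • (((Matrix.fromBlocks (Matrix.fromBlocks Dhat 0 0 Rhat) 0 0 Shat).map
            (fun x : ℝ => (x : ℂ))) *ᵥ v) →
      lam.im = 0 ∧
        lam.re ∈
          Icc ((lPhi - Real.sqrt (lPhi ^ 2 + 4 * LPhi * LS * LL * κD)) / 2)
              ((LPhi - Real.sqrt (LPhi ^ 2 + 4 * lPhi * lS * lL / κD)) / 2)
            ∪ Icc lPhi LPhi
            ∪ Icc ((lPhi + Real.sqrt (lPhi ^ 2 + 4 * lPhi * lS * lL / κD)) / 2)
                ((LPhi + Real.sqrt (LPhi ^ 2 + 4 * LPhi * LS * LL * κD)) / 2) :=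
  block_diag_preconditioner_eigenvalue_bounds_general m q D Dhat R Rhat L Lhat H hD hDhat hR hRhat
    hL hLhat S Stilde Shat hSdef hStdef hShdef hS hSt hSh lD LD lR LR lS LS lL LL hlD hlR hlS hLS
    hlL hLL hDint hRint hSint hLint dmin dmax hdmin hdmax lPhi LPhi κD hlPhi hLPhi hκD
end

section
/- Let n, m be positive integers with m ≤ n. Let Φ ∈ ℝ^{n×n} be symmetric positive definite, Ψ ∈ ℝ^{m×n} have full row rank, and set S = ΨΦ⁻¹Ψᵀ. Let Φ̂ ∈ ℝ^{n×n} and Ŝ ∈ ℝ^{m×m} be symmetric positive definite. Let δ and Δ be the minimum and maximum eigenvalues of Φ̂⁻¹Φ, and let φ and Φ' be the minimum and maximum eigenvalues of Ŝ⁻¹S. Consider the saddle point matrix A = [[Φ, Ψᵀ], [Ψ, 0]] ∈ ℝ^{(n+m)×(n+m)} and the block diagonal preconditioner P = blkdiag(Φ̂, Ŝ). Then every eigenvalue λ of P⁻¹A satisfies λ ∈ [ (δ − √(δ² + 4ΔΦ'))/2 , (Δ − √(Δ² + 4δφ))/2 ] ∪ [δ, Δ] ∪ [ (δ + √(δ²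 + 4δφ))/2 , (Δ + √(Δ² + 4ΔΦ'))/2 ]. -/
open Matrix Set

/-!
Write an eigenvector as `(x, y)`, so that `Φ x + Ψᵀ y = λ Φ̂ x` and `Ψ x = λ Ŝ y`. If `y = 0`, then
`λ` is an eigenvalue of `Φ̂⁻¹ Φ` and lies in `[δ, Δ]`. Otherwise, for `λ ∉ [δ, Δ]` the matrix
`N = λ Φ̂ - Φ` is definite (in fact `λ ≤ 0` or `λ > Δ`), and up to sign it lies between
`(λ - Δ)/Δ · Φ` and `(λ - δ)/δ · Φ`. Since `N x = Ψᵀ y` and `xᵀ N x = λ yᵀ Ŝ y`, comparing the forms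
of `N⁻¹` and `Φ⁻¹` at `Ψᵀ y`, and bounding `(Ψᵀ y)ᵀ Φ⁻¹ (Ψᵀ y) = yᵀ S y` between `φ yᵀ Ŝ y` and
`Φ' yᵀ Ŝ y`, gives `λ (λ - Δ) ≤ Δ Φ'` and `δ φ ≤ λ (λ - δ)`. These quadratic inequalities
locate `λ` in the outer intervals.
-/

namespace Matrix

variable {ι κ : Type*} [Fintype ι] [Fintype κ]

theorem IsHermitian.dotProduct_mulVec_comm {K : Matrix ι ι ℝ} (hK : K.IsHermitian)
    (p q : ι → ℝ) : p ⬝ᵥ K *ᵥ q = q ⬝ᵥ K *ᵥ p := by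
  rw [dotProduct_mulVec, ← mulVec_transpose, ← conjTranspose_eq_transpose_of_trivial, hK.eq,
    dotProduct_comm]

theorem IsHermitian.dotProduct_mulVec_smul_sub {K : Matrix ι ι ℝ} (hK : K.IsHermitian)
    (c : ℝ) (p q : ι → ℝ) :
    (c • p - q) ⬝ᵥ K *ᵥ (c • p - q)
      = c ^ 2 * (p ⬝ᵥ K *ᵥ p) - 2 * c * (p ⬝ᵥ K *ᵥ q) + q ⬝ᵥ K *ᵥ q := by
  simp only [mulVec_sub, mulVec_smul, dotProduct_sub, sub_dotProduct, dotProduct_smul,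
    smul_dotProduct, smul_eq_mul, hK.dotProduct_mulVec_comm q p]
  ring

theorem dotProduct_mulVec_mul_mul_transpose (Ψ : Matrix κ ι ℝ) (M : Matrix ι ι ℝ)
    (y : κ → ℝ) : y ⬝ᵥ (Ψ * M * Ψᵀ) *ᵥ y = (Ψᵀ *ᵥ y) ⬝ᵥ M *ᵥ (Ψᵀ *ᵥ y) := by
  rw [← mulVec_mulVec, ← mulVec_mulVec, dotProduct_mulVec, ← mulVec_transpose]

theorem fromBlocks_saddle_mulVec_eq_smul {Φ Φhat : Matrix ι ι ℝ} {Ψ : Matrix κ ι ℝ}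
    {Shat : Matrix κ κ ℝ} {lam : ℝ} {v : ι ⊕ κ → ℝ}
    (heq : fromBlocks Φ Ψᵀ Ψ 0 *ᵥ v = lam • fromBlocks Φhat 0 0 Shat *ᵥ v) :
    Φ *ᵥ (v ∘ Sum.inl) + Ψᵀ *ᵥ (v ∘ Sum.inr) = lam • Φhat *ᵥ (v ∘ Sum.inl)
      ∧ Ψ *ᵥ (v ∘ Sum.inl) = lam • Shat *ᵥ (v ∘ Sum.inr) :=
  ⟨funext fun i => by simpa [fromBlocks_mulVec] using congrFun heq (Sum.inl i),
    funext fun j => by simpa [fromBlocks_mulVec] using congrFun heq (Sum.inr j)⟩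

def realEigenvalues (M : Matrix ι ι ℝ) : Set ℝ := {μ | ∃ v : ι → ℝ, v ≠ 0 ∧ M *ᵥ v = μ • v}

variable [DecidableEq ι]

theorem mulVec_nonsing_inv_mulVec {P : Matrix ι ι ℝ} (hP : IsUnit P) (v : ι → ℝ) :
    P *ᵥ (P⁻¹ *ᵥ v) = v := by
  rw [mulVec_mulVec, mul_nonsing_inv _ ((isUnit_iff_isUnit_det P).mp hP), one_mulVec]

theorem PosDef.posSemidef_mul_inv_mul_transpose {Φ : Matrix ι ι ℝ} (hΦ : Φ.PosDef)
    (Ψ : Matrix κ ι ℝ) : (Ψ * Φ⁻¹ * Ψᵀ).PosSemidef := by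
  simpa using hΦ.inv.posSemidef.mul_mul_conjTranspose_same Ψ

theorem mul_dotProduct_mulVec_le_inv {Φ N : Matrix ι ι ℝ} (hΦ : Φ.PosDef) {a : ℝ} (ha : 0 ≤ a)
    (h : ∀ z, a * (z ⬝ᵥ Φ *ᵥ z) ≤ z ⬝ᵥ N *ᵥ z) (x : ι → ℝ) :
    a * (x ⬝ᵥ N *ᵥ x) ≤ (N *ᵥ x) ⬝ᵥ Φ⁻¹ *ᵥ (N *ᵥ x) := by
  set u := Φ⁻¹ *ᵥ (N *ᵥ x)
  have hsq := hΦ.posSemidef.dotProduct_mulVec_nonneg (a • x - u)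
  rw [star_trivial, hΦ.isHermitian.dotProduct_mulVec_smul_sub,
    mulVec_nonsing_inv_mulVec hΦ.isUnit] at hsq
  nlinarith [mul_le_mul_of_nonneg_left (h x) ha, dotProduct_comm u (N *ᵥ x)]

theorem inv_le_mul_dotProduct_mulVec {Φ N : Matrix ι ι ℝ} (hΦ : Φ.PosDef) (hN : N.PosSemidef)
    {b : ℝ} (hb : 0 < b) (h : ∀ z, z ⬝ᵥ N *ᵥ z ≤ b * (z ⬝ᵥ Φ *ᵥ z)) (x : ι → ℝ) :
    (N *ᵥ x) ⬝ᵥ Φ⁻¹ *ᵥ (N *ᵥ x) ≤ b * (x ⬝ᵥ N *ᵥ x) := by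
  set u := Φ⁻¹ *ᵥ (N *ᵥ x)
  have hsq := hN.dotProduct_mulVec_nonneg (b • x - u)
  rw [star_trivial, hN.isHermitian.dotProduct_mulVec_smul_sub,
    hN.isHermitian.dotProduct_mulVec_comm x u] at hsq
  have hu := h u
  rw [mulVec_nonsing_inv_mulVec hΦ.isUnit] at hu
  nlinarith [dotProduct_comm u (N *ᵥ x)]

theorem mul_dotProduct_mulVec_le_inv_le {Φ N : Matrix ι ι ℝ} (hΦ : Φ.PosDef)
    (hN : N.IsHermitian) {a b : ℝ} (ha : 0 ≤ a) (hb : 0 < b)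
    (hlo : ∀ z, a * (z ⬝ᵥ Φ *ᵥ z) ≤ z ⬝ᵥ N *ᵥ z) (hhi : ∀ z, z ⬝ᵥ N *ᵥ z ≤ b * (z ⬝ᵥ Φ *ᵥ z))
    (x : ι → ℝ) :
    a * (x ⬝ᵥ N *ᵥ x) ≤ (N *ᵥ x) ⬝ᵥ Φ⁻¹ *ᵥ (N *ᵥ x)
      ∧ (N *ᵥ x) ⬝ᵥ Φ⁻¹ *ᵥ (N *ᵥ x) ≤ b * (x ⬝ᵥ N *ᵥ x) := by
  have hNpsd : N.PosSemidef := by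
    refine PosSemidef.of_dotProduct_mulVec_nonneg hN fun z => ?_
    have hz := hΦ.posSemidef.dotProduct_mulVec_nonneg z
    rw [star_trivial] at hz ⊢
    exact (mul_nonneg ha hz).trans (hlo z)
  exact ⟨mul_dotProduct_mulVec_le_inv hΦ ha hlo x, inv_le_mul_dotProduct_mulVec hΦ hNpsd hb hhi x⟩

theorem mem_realEigenvalues_nonsing_inv_mul_iff {A P : Matrix ι ι ℝ} (hP : IsUnit P) {μ : ℝ} :
    μ ∈ realEigenvalues (P⁻¹ * A) ↔ ∃ v : ι → ℝ, v ≠ 0 ∧ A *ᵥ v = μ • P *ᵥ v := by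
  refine exists_congr fun v => and_congr_right fun _ => ⟨fun h => ?_, fun h => ?_⟩
  · rw [← mulVec_nonsing_inv_mulVec hP (A *ᵥ v), mulVec_mulVec _ P⁻¹, h, mulVec_smul]
  · rw [← mulVec_mulVec, h, mulVec_smul, mulVec_mulVec,
      nonsing_inv_mul _ ((isUnit_iff_isUnit_det P).mp hP), one_mulVec]

open scoped MatrixOrder in
/-- With `C = √P`, the pencil `(A, P)` has the same eigenvalues as the symmetric matrix
`C⁻¹ A C⁻¹`, which is congruent to `A`. -/
theorem posSemidef_of_forall_mulVec_eq_smul_mulVec {A P : Matrix ι ι ℝ} (hA : A.IsHermitian)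
    (hP : P.PosDef) (h : ∀ (μ : ℝ) (v : ι → ℝ), v ≠ 0 → A *ᵥ v = μ • P *ᵥ v → 0 ≤ μ) :
    A.PosSemidef := by
  set C := CFC.sqrt P
  have hC : C.PosDef := (CFC.sqrt_nonneg P).posSemidef.posDef_iff_isUnit.mpr
    ((CFC.isUnit_sqrt_iff P hP.posSemidef.nonneg).mpr hP.isUnit)
  have hCC : C * C = P := CFC.sqrt_mul_sqrt_self P hP.posSemidef.nonneg
  have hCdet : IsUnit C.det := (isUnit_iff_isUnit_det C).mp hC.isUnit
  set B := C⁻¹ * A * C⁻¹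
  have hB : B.IsHermitian := by
    have := isHermitian_mul_mul_conjTranspose C⁻¹ hA
    rwa [hC.isHermitian.inv.eq] at this
  have hCBC : A = C * B * C := by
    simp only [B, ← mul_assoc, mul_nonsing_inv _ hCdet, one_mul]
    rw [mul_assoc, nonsing_inv_mul _ hCdet, mul_one]
  have hBpsd : B.PosSemidef := by
    refine hB.posSemidef_iff_eigenvalues_nonneg.mpr fun i => ?_
    have he : ⇑(hB.eigenvectorBasis i) ≠ 0 :=
      (WithLp.ofLp_eq_zero 2).ne.2 <| hB.eigenvectorBasis.orthonormal.ne_zero i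
    refine h _ (C⁻¹ *ᵥ hB.eigenvectorBasis i) (fun h0 => he ?_) ?_
    · simpa [mulVec_mulVec, mul_nonsing_inv _ hCdet] using congrArg (C *ᵥ ·) h0
    · rw [hCBC, ← hCC, mulVec_mulVec, mulVec_mulVec, mul_assoc, mul_assoc,
        mul_nonsing_inv _ hCdet, mul_one, ← mulVec_mulVec, hB.mulVec_eigenvectorBasis,
        mulVec_smul, mul_assoc C C, mul_nonsing_inv _ hCdet, mul_one]
  have := hBpsd.mul_mul_conjTranspose_same C
  rwa [hC.isHermitian.eq, ← hCBC] at this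

theorem mul_dotProduct_mulVec_le_of_mem_lowerBounds {A P : Matrix ι ι ℝ} (hA : A.IsHermitian)
    (hP : P.PosDef) {a : ℝ} (ha : a ∈ lowerBounds (realEigenvalues (P⁻¹ * A))) (x : ι → ℝ) :
    a * (x ⬝ᵥ P *ᵥ x) ≤ x ⬝ᵥ A *ᵥ x := by
  have hpsd : (A - a • P).PosSemidef := by
    refine posSemidef_of_forall_mulVec_eq_smul_mulVec
      (hA.sub (hP.isHermitian.smul (IsSelfAdjoint.all a))) hP fun μ v hv h => ?_
    have : a + μ ∈ realEigenvalues (P⁻¹ * A) := by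
      refine (mem_realEigenvalues_nonsing_inv_mul_iff hP.isUnit).mpr ⟨v, hv, ?_⟩
      rw [sub_mulVec, sub_eq_iff_eq_add, smul_mulVec] at h
      rw [h, add_smul, add_comm]
    linarith [ha this]
  have := hpsd.dotProduct_mulVec_nonneg x
  rw [star_trivial, sub_mulVec, dotProduct_sub, smul_mulVec, dotProduct_smul, smul_eq_mul] at this
  linarith

theorem dotProduct_mulVec_le_mul_of_mem_upperBounds {A P : Matrix ι ι ℝ} (hA : A.IsHermitian)
    (hP : P.PosDef) {b : ℝ} (hb : b ∈ upperBounds (realEigenvalues (P⁻¹ * A))) (x : ι → ℝ) :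
    x ⬝ᵥ A *ᵥ x ≤ b * (x ⬝ᵥ P *ᵥ x) := by
  have hneg : -b ∈ lowerBounds (realEigenvalues (P⁻¹ * -A)) := by
    rintro μ ⟨v, hv, h⟩
    rw [Matrix.mul_neg, neg_mulVec] at h
    have : -μ ∈ realEigenvalues (P⁻¹ * A) := ⟨v, hv, by rw [neg_smul, ← h, neg_neg]⟩
    linarith [hb this]
  have := mul_dotProduct_mulVec_le_of_mem_lowerBounds hA.neg hP hneg x
  rw [neg_mulVec, dotProduct_neg] at this
  linarith

theorem pos_of_mem_realEigenvalues_nonsing_inv_mul {A P : Matrix ι ι ℝ} (hA : A.PosDef)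
    (hP : P.PosDef) {μ : ℝ} (hμ : μ ∈ realEigenvalues (P⁻¹ * A)) : 0 < μ := by
  obtain ⟨v, hv, h⟩ := (mem_realEigenvalues_nonsing_inv_mul_iff hP.isUnit).mp hμ
  have hform : v ⬝ᵥ A *ᵥ v = μ * (v ⬝ᵥ P *ᵥ v) := by rw [h, dotProduct_smul, smul_eq_mul]
  have hAv := hA.dotProduct_mulVec_pos hv
  have hPv := hP.dotProduct_mulVec_pos hv
  rw [star_trivial] at hAv hPv
  exact pos_of_mul_pos_left (hform ▸ hAv) hPv.le

theorem nonneg_of_mem_realEigenvalues_nonsing_inv_mul {A P : Matrix ι ι ℝ} (hA : A.PosSemidef)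
    (hP : P.PosDef) {μ : ℝ} (hμ : μ ∈ realEigenvalues (P⁻¹ * A)) : 0 ≤ μ := by
  obtain ⟨v, hv, h⟩ := (mem_realEigenvalues_nonsing_inv_mul_iff hP.isUnit).mp hμ
  have hform : v ⬝ᵥ A *ᵥ v = μ * (v ⬝ᵥ P *ᵥ v) := by rw [h, dotProduct_smul, smul_eq_mul]
  have hAv := hA.dotProduct_mulVec_nonneg v
  have hPv := hP.dotProduct_mulVec_pos hv
  rw [star_trivial] at hAv hPv
  exact nonneg_of_mul_nonneg_left (hform ▸ hAv) hPv

theorem inv_quadForm_bounds_of_shifted_pencil {Φ Φhat : Matrix ι ι ℝ} (hΦ : Φ.PosDef)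
    (hΦhat : Φhat.IsHermitian) {δ Δ lam : ℝ} (hδ : 0 < δ) (hδΔ : δ ≤ Δ)
    (hlo : ∀ z, δ * (z ⬝ᵥ Φhat *ᵥ z) ≤ z ⬝ᵥ Φ *ᵥ z)
    (hhi : ∀ z, z ⬝ᵥ Φ *ᵥ z ≤ Δ * (z ⬝ᵥ Φhat *ᵥ z))
    (hlam : lam ≤ 0 ∨ Δ < lam) {x w : ι → ℝ} (hw : (lam • Φhat - Φ) *ᵥ x = w) :
    (lam - Δ) * (x ⬝ᵥ w) ≤ Δ * (w ⬝ᵥ Φ⁻¹ *ᵥ w)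
      ∧ δ * (w ⬝ᵥ Φ⁻¹ *ᵥ w) ≤ (lam - δ) * (x ⬝ᵥ w) := by
  have hΔ : 0 < Δ := hδ.trans_le hδΔ
  -- `σ = ±1` is the sign making `σ • (lam • Φhat - Φ)` positive definite; it treats
  -- `lam ≤ 0` and `Δ < lam` at once.
  obtain ⟨σ, hσ, hσlam, hσΔ, hσδ⟩ : ∃ σ : ℝ, σ * σ = 1 ∧ 0 ≤ σ * lam ∧ 0 ≤ σ * (lam - Δ) ∧
      0 < σ * (lam - δ) := by
    rcases hlam with h | h
    · exact ⟨-1, by norm_num, by linarith, by linarith, by linarith⟩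
    · exact ⟨1, by norm_num, by linarith, by linarith, by linarith⟩
  set N := σ • (lam • Φhat - Φ)
  have hN : N.IsHermitian :=
    ((hΦhat.smul (IsSelfAdjoint.all lam)).sub hΦ.isHermitian).smul (IsSelfAdjoint.all σ)
  have hform : ∀ z, z ⬝ᵥ N *ᵥ z = σ * (lam * (z ⬝ᵥ Φhat *ᵥ z) - z ⬝ᵥ Φ *ᵥ z) := fun z => by
    simp only [N, smul_mulVec, sub_mulVec, dotProduct_smul, dotProduct_sub, smul_eq_mul]
  have hNlo : ∀ z, σ * (lam - Δ) / Δ * (z ⬝ᵥ Φ *ᵥ z) ≤ z ⬝ᵥ N *ᵥ z := fun z => by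
    rw [hform, div_mul_eq_mul_div, div_le_iff₀ hΔ]
    nlinarith [mul_le_mul_of_nonneg_left (hhi z) hσlam]
  have hNhi : ∀ z, z ⬝ᵥ N *ᵥ z ≤ σ * (lam - δ) / δ * (z ⬝ᵥ Φ *ᵥ z) := fun z => by
    rw [hform, div_mul_eq_mul_div, le_div_iff₀ hδ]
    nlinarith [mul_le_mul_of_nonneg_left (hlo z) hσlam]
  obtain ⟨h1, h2⟩ := mul_dotProduct_mulVec_le_inv_le hΦ hN (div_nonneg hσΔ hΔ.le)
    (div_pos hσδ hδ) hNlo hNhi x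
  have hNx : N *ᵥ x = σ • w := by rw [smul_mulVec, hw]
  simp only [hNx, mulVec_smul, dotProduct_smul, smul_dotProduct, smul_eq_mul] at h1 h2
  rw [div_mul_eq_mul_div, div_le_iff₀ hΔ] at h1
  rw [div_mul_eq_mul_div, le_div_iff₀ hδ] at h2
  constructor <;> nlinarith

theorem quadratic_bounds_of_saddle_eq [DecidableEq κ] {Φ Φhat : Matrix ι ι ℝ}
    {Ψ : Matrix κ ι ℝ} {S Shat : Matrix κ κ ℝ}
    (hΦ : Φ.PosDef) (hΦhat : Φhat.PosDef) (hS : S = Ψ * Φ⁻¹ * Ψᵀ) (hShat : Shat.PosDef)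
    {δ Δ φ Φ' lam : ℝ} (hδ : 0 < δ) (hδΔ : δ ≤ Δ)
    (hδlow : δ ∈ lowerBounds (realEigenvalues (Φhat⁻¹ * Φ)))
    (hΔup : Δ ∈ upperBounds (realEigenvalues (Φhat⁻¹ * Φ)))
    (hφlow : φ ∈ lowerBounds (realEigenvalues (Shat⁻¹ * S)))
    (hΦ'up : Φ' ∈ upperBounds (realEigenvalues (Shat⁻¹ * S)))
    (hlam : lam ∉ Icc δ Δ) {x : ι → ℝ} {y : κ → ℝ} (hxy : x ≠ 0 ∨ y ≠ 0)
    (E1 : Φ *ᵥ x + Ψᵀ *ᵥ y = lam • Φhat *ᵥ x) (E2 : Ψ *ᵥ x = lam • Shat *ᵥ y) :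
    lam * (lam - Δ) ≤ Δ * Φ' ∧ δ * φ ≤ lam * (lam - δ) := by
  have hlo := mul_dotProduct_mulVec_le_of_mem_lowerBounds hΦ.isHermitian hΦhat hδlow
  have hhi := dotProduct_mulVec_le_mul_of_mem_upperBounds hΦ.isHermitian hΦhat hΔup
  have hy : y ≠ 0 := by
    rintro rfl
    rw [mulVec_zero, add_zero] at E1
    have hmem : lam ∈ realEigenvalues (Φhat⁻¹ * Φ) :=
      (mem_realEigenvalues_nonsing_inv_mul_iff hΦhat.isUnit).mpr
        ⟨x, hxy.resolve_right (not_not.mpr rfl), E1⟩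
    exact hlam ⟨hδlow hmem, hΔup hmem⟩
  have hq : 0 < y ⬝ᵥ Shat *ᵥ y := by simpa using hShat.dotProduct_mulVec_pos hy
  have hw : (lam • Φhat - Φ) *ᵥ x = Ψᵀ *ᵥ y := by
    rw [sub_mulVec, smul_mulVec, ← E1, add_sub_cancel_left]
  have ht : x ⬝ᵥ Ψᵀ *ᵥ y = lam * (y ⬝ᵥ Shat *ᵥ y) := by
    rw [dotProduct_mulVec, vecMul_transpose, E2, smul_dotProduct, smul_eq_mul, dotProduct_comm]
  have hlam' : lam ≤ 0 ∨ Δ < lam := by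
    by_contra! hmid
    have hlt : lam < δ := not_le.mp fun h => hlam ⟨h, hmid.2⟩
    have hform : x ⬝ᵥ (lam • Φhat - Φ) *ᵥ x = lam * (x ⬝ᵥ Φhat *ᵥ x) - x ⬝ᵥ Φ *ᵥ x := by
      rw [sub_mulVec, smul_mulVec, dotProduct_sub, dotProduct_smul, smul_eq_mul]
    rw [hw, ht] at hform
    have hx := hΦhat.posSemidef.dotProduct_mulVec_nonneg x
    rw [star_trivial] at hx
    nlinarith [hlo x, mul_pos hmid.1 hq]
  obtain ⟨h1, h2⟩ :=
    inv_quadForm_bounds_of_shifted_pencil hΦ hΦhat.isHermitian hδ hδΔ hlo hhi hlam' hw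
  rw [ht, ← dotProduct_mulVec_mul_mul_transpose, ← hS] at h1 h2
  have hS' : S.IsHermitian := hS ▸ (hΦ.posSemidef_mul_inv_mul_transpose Ψ).isHermitian
  have hSlo := mul_dotProduct_mulVec_le_of_mem_lowerBounds hS' hShat hφlow y
  have hShi := dotProduct_mulVec_le_mul_of_mem_upperBounds hS' hShat hΦ'up y
  constructor
  · refine le_of_mul_le_mul_right ?_ hq
    nlinarith
  · refine le_of_mul_le_mul_right ?_ hq
    nlinarith

end Matrix

theorem sub_sqrt_sq_add_monotone {c : ℝ} (hc : 0 ≤ c) :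
    Monotone fun t : ℝ => t - √(t ^ 2 + c) := by
  intro a b hab
  have hp := Real.sq_sqrt (by positivity : 0 ≤ a ^ 2 + c)
  have hq := Real.sq_sqrt (by positivity : 0 ≤ b ^ 2 + c)
  have hpa : |a| ≤ √(a ^ 2 + c) := Real.abs_le_sqrt (by linarith)
  have hqb : |b| ≤ √(b ^ 2 + c) := Real.abs_le_sqrt (by linarith)
  dsimp only
  nlinarith [abs_le.mp hpa, abs_le.mp hqb, Real.sqrt_nonneg (a ^ 2 + c),
    Real.sqrt_nonneg (b ^ 2 + c)]

theorem mem_union_Icc_of_quadratic_bounds {δ Δ φ Φ' lam : ℝ} (hδ : 0 < δ) (hδΔ : δ ≤ Δ)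
    (hφ : 0 ≤ φ) (hΦ' : 0 ≤ Φ') (hupper : lam * (lam - Δ) ≤ Δ * Φ')
    (hlower : δ * φ ≤ lam * (lam - δ)) :
    lam ∈ Icc ((δ - √(δ ^ 2 + 4 * Δ * Φ')) / 2) ((Δ - √(Δ ^ 2 + 4 * δ * φ)) / 2)
      ∪ Icc δ Δ ∪ Icc ((δ + √(δ ^ 2 + 4 * δ * φ)) / 2) ((Δ + √(Δ ^ 2 + 4 * Δ * Φ')) / 2) := by
  have hΔ : 0 < Δ := hδ.trans_le hδΔ
  have hnear : |2 * lam - Δ| ≤ √(Δ ^ 2 + 4 * Δ * Φ') := Real.abs_le_sqrt (by nlinarith)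
  have hfar : √(δ ^ 2 + 4 * δ * φ) ≤ |2 * lam - δ| := by
    rw [← Real.sqrt_sq_eq_abs]
    exact Real.sqrt_le_sqrt (by nlinarith)
  have hδr : δ ≤ √(δ ^ 2 + 4 * δ * φ) := Real.le_sqrt_of_sq_le (by nlinarith)
  rw [abs_le] at hnear
  rcases le_or_gt lam 0 with hneg | hpos
  · rw [abs_of_neg (by linarith)] at hfar
    have h₁ := sub_sqrt_sq_add_monotone (by positivity : 0 ≤ 4 * Δ * Φ') hδΔ
    have h₂ := sub_sqrt_sq_add_monotone (by positivity : 0 ≤ 4 * δ * φ) hδΔ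
    dsimp only at h₁ h₂
    exact Or.inl (Or.inl ⟨by linarith, by linarith⟩)
  · have hright : 0 ≤ 2 * lam - δ := by
      by_contra! h
      rw [abs_of_neg h] at hfar
      linarith
    rw [abs_of_nonneg hright] at hfar
    rcases le_or_gt lam Δ with hle | hgt
    · exact Or.inl (Or.inr ⟨by linarith, hle⟩)
    · exact Or.inr ⟨by linarith, by linarith⟩

theorem general_block_diag_saddle_point_eigenvalue_bounds_general
    (n m : ℕ)
    (Φ Φhat : Matrix (Fin n) (Fin n) ℝ) (Ψ : Matrix (Fin m) (Fin n) ℝ)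
    (hΦ : Φ.PosDef) (hΦhat : Φhat.PosDef)
    (S Shat : Matrix (Fin m) (Fin m) ℝ)
    (hSdef : S = Ψ * Φ⁻¹ * Ψᵀ) (hShat : Shat.PosDef)
    (δ Δ φ Φ' : ℝ)
    (hδ : IsLeast {μ : ℝ | ∃ v : Fin n → ℝ, v ≠ 0 ∧ (Φhat⁻¹ * Φ) *ᵥ v = μ • v} δ)
    (hΔ : IsGreatest {μ : ℝ | ∃ v : Fin n → ℝ, v ≠ 0 ∧ (Φhat⁻¹ * Φ) *ᵥ v = μ • v} Δ)
    (hφ : IsLeast {μ : ℝ | ∃ v : Fin m → ℝ, v ≠ 0 ∧ (Shat⁻¹ * S) *ᵥ v = μ • v} φ)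
    (hΦ' : IsGreatest {μ : ℝ | ∃ v : Fin m → ℝ, v ≠ 0 ∧ (Shat⁻¹ * S) *ᵥ v = μ • v} Φ') :
    ∀ (lam : ℝ) (v : (Fin n ⊕ Fin m) → ℝ), v ≠ 0 →
      (Matrix.fromBlocks Φ Ψᵀ Ψ 0) *ᵥ v
        = lam • ((Matrix.fromBlocks Φhat 0 0 Shat) *ᵥ v) →
      lam ∈
        Icc ((δ - Real.sqrt (δ ^ 2 + 4 * Δ * Φ')) / 2)
            ((Δ - Real.sqrt (Δ ^ 2 + 4 * δ * φ)) / 2)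
          ∪ Icc δ Δ
          ∪ Icc ((δ + Real.sqrt (δ ^ 2 + 4 * δ * φ)) / 2)
              ((Δ + Real.sqrt (Δ ^ 2 + 4 * Δ * Φ')) / 2) := by
  intro lam v hv heq
  by_cases hmid : lam ∈ Icc δ Δ
  · exact Or.inl (Or.inr hmid)
  have hδ0 : 0 < δ := pos_of_mem_realEigenvalues_nonsing_inv_mul hΦ hΦhat hδ.1
  have hδΔ : δ ≤ Δ := hΔ.2 hδ.1
  have hφ0 : 0 ≤ φ := nonneg_of_mem_realEigenvalues_nonsing_inv_mul
    (hSdef ▸ hΦ.posSemidef_mul_inv_mul_transpose Ψ) hShat hφ.1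
  have hxy : v ∘ Sum.inl ≠ 0 ∨ v ∘ Sum.inr ≠ 0 := by
    contrapose! hv
    rw [← Sum.elim_comp_inl_inr v, hv.1, hv.2, Sum.elim_zero_zero]
  obtain ⟨E1, E2⟩ := fromBlocks_saddle_mulVec_eq_smul heq
  obtain ⟨hupper, hlower⟩ := quadratic_bounds_of_saddle_eq hΦ hΦhat hSdef hShat hδ0 hδΔ
    hδ.2 hΔ.2 hφ.2 hΦ'.2 hmid hxy E1 E2
  exact mem_union_Icc_of_quadratic_bounds hδ0 hδΔ hφ0 (hφ0.trans (hΦ'.2 hφ.1)) hupper hlower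

/-- Eigenvalue bounds for a general block diagonally preconditioned saddle point
matrix (the classical result quoted in the proof of Theorem 3.1). -/
theorem general_block_diag_saddle_point_eigenvalue_bounds
    (n m : ℕ) (hn : 0 < n) (hm : 0 < m) (hmn : m ≤ n)
    (Φ Φhat : Matrix (Fin n) (Fin n) ℝ) (Ψ : Matrix (Fin m) (Fin n) ℝ)
    (hΦ : Φ.PosDef) (hΦhat : Φhat.PosDef)
    (hrank : Ψ.rank = m)
    (S Shat : Matrix (Fin m) (Fin m) ℝ)
    (hSdef : S = Ψ * Φ⁻¹ * Ψᵀ) (hShat : Shat.PosDef)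
    (δ Δ φ Φ' : ℝ)
    (hδ : IsLeast {μ : ℝ | ∃ v : Fin n → ℝ, v ≠ 0 ∧ (Φhat⁻¹ * Φ) *ᵥ v = μ • v} δ)
    (hΔ : IsGreatest {μ : ℝ | ∃ v : Fin n → ℝ, v ≠ 0 ∧ (Φhat⁻¹ * Φ) *ᵥ v = μ • v} Δ)
    (hφ : IsLeast {μ : ℝ | ∃ v : Fin m → ℝ, v ≠ 0 ∧ (Shat⁻¹ * S) *ᵥ v = μ • v} φ)
    (hΦ' : IsGreatest {μ : ℝ | ∃ v : Fin m → ℝ, v ≠ 0 ∧ (Shat⁻¹ * S) *ᵥ v = μ • v} Φ') :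
    ∀ (lam : ℝ) (v : (Fin n ⊕ Fin m) → ℝ), v ≠ 0 →
      (Matrix.fromBlocks Φ Ψᵀ Ψ 0) *ᵥ v
        = lam • ((Matrix.fromBlocks Φhat 0 0 Shat) *ᵥ v) →
      lam ∈
        Icc ((δ - Real.sqrt (δ ^ 2 + 4 * Δ * Φ')) / 2)
            ((Δ - Real.sqrt (Δ ^ 2 + 4 * δ * φ)) / 2)
          ∪ Icc δ Δ
          ∪ Icc ((δ + Real.sqrt (δ ^ 2 + 4 * δ * φ)) / 2)
              ((Δ + Real.sqrt (Δ ^ 2 + 4 * Δ * Φ')) / 2) :=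
  general_block_diag_saddle_point_eigenvalue_bounds_general n m Φ Φhat Ψ hΦ hΦhat S Shat hSdef hShat
    δ Δ φ Φ' hδ hΔ hφ hΦ'
end

section
/- Let m, q be positive integers. Let D ∈ ℝ^{m×m} and R ∈ ℝ^{q×q} be symmetric positive definite, let L, L̂ ∈ ℝ^{m×m} be invertible, and let H ∈ ℝ^{q×m}. Define S = LᵀD⁻¹L + HᵀR⁻¹H, S̃ = LᵀD⁻¹L, and Ŝ = L̂ᵀD⁻¹L̂. Suppose every eigenvalue of S̃⁻¹S lies in [λ_S, Λ_S] and every eigenvalue of (L̂ᵀL̂)⁻¹(LᵀL) lies in [λ_L, Λ_L], with all endpoints positive, and let κ(D) = λ_max(D)/λ_min(D) be the spectral condition number of D. Then for every nonzero vector x ∈ ℝ^m, the Rayleigh quotient (xᵀSx)/(xᵀŜx) lies in the interval [ λ_Sλ_L/κ(D) , Λ_SΛ_Lκ(D) ]. -/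
/-!
For `A` symmetric and `B` positive definite, `B⁻¹A` is similar to the symmetric matrix
`B^{-1/2} A B^{-1/2}`, so eigenvalue bounds `[a, b]` for `B⁻¹A` are the Loewner bounds
`a • B ≤ A ≤ b • B`, i.e. bounds on the generalized Rayleigh quotient `xᵀAx / xᵀBx`.
Since `S̃⁻¹(LᵀL) = L⁻¹DL` is similar to `D`, the quotient `xᵀ(LᵀL)x / xᵀS̃x` lies in
`[λ_min(D), λ_max(D)]`, and likewise for `L̂` and `Ŝ`. Passing from `S` to `S̃`, to `LᵀL`,
to `L̂ᵀL̂` and finally to `Ŝ` multiplies the bounds.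
-/

open Matrix Set
open scoped MatrixOrder

variable {n : Type*} [Fintype n]

theorem Matrix.dotProduct_mulVec_le_dotProduct_mulVec {A B : Matrix n n ℝ} (h : A ≤ B)
    (x : n → ℝ) : x ⬝ᵥ A *ᵥ x ≤ x ⬝ᵥ B *ᵥ x := by
  have := (le_iff.mp h).dotProduct_mulVec_nonneg x
  rwa [star_trivial, sub_mulVec, dotProduct_sub, sub_nonneg] at this

theorem Matrix.PosDef.pos_of_mulVec_eq_smul_s2 {M : Matrix n n ℝ} (hM : M.PosDef) {μ : ℝ}
    {v : n → ℝ} (hv : v ≠ 0) (h : M *ᵥ v = μ • v) : 0 < μ := by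
  have := hM.dotProduct_mulVec_pos hv
  rw [h, dotProduct_smul, smul_eq_mul, star_trivial] at this
  exact pos_of_mul_pos_left this (dotProduct_self_star_nonneg v)

variable [DecidableEq n]

theorem Matrix.spectrum_subset_of_mulVec_eq_smul {K : Type*} [Field K] {M : Matrix n n K}
    {s : Set K} (h : ∀ (μ : K) (v : n → K), v ≠ 0 → M *ᵥ v = μ • v → μ ∈ s) :
    spectrum K M ⊆ s := by
  intro μ hμ
  rw [← spectrum_toLin'] at hμ
  obtain ⟨v, hv⟩ := (Module.End.HasEigenvalue.of_mem_spectrum hμ).exists_hasEigenvector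
  exact h μ v hv.2 (by simpa using hv.apply_eq_smul)

theorem Matrix.spectrum_nonsing_inv_mul_mul {K : Type*} [Field K] {A C : Matrix n n K}
    (hC : IsUnit C.det) : spectrum K (C⁻¹ * A * C) = spectrum K A :=
  spectrum.units_conjugate' (u := nonsingInvUnit C hC)

theorem Matrix.spectrum_inv_transpose_mul_inv_mul_mul_transpose_mul {K : Type*} [Field K]
    {A C : Matrix n n K} (hA : IsUnit A.det) (hC : IsUnit C.det) :
    spectrum K ((Cᵀ * A⁻¹ * C)⁻¹ * (Cᵀ * C)) = spectrum K A := by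
  have hCt : IsUnit Cᵀ.det := by rwa [det_transpose]
  have : (Cᵀ * A⁻¹ * C)⁻¹ * (Cᵀ * C) = C⁻¹ * A * C := by
    rw [mul_inv_rev, mul_inv_rev, nonsing_inv_nonsing_inv A hA]
    simp only [Matrix.mul_assoc, nonsing_inv_mul_cancel_left _ _ hCt]
  rw [this, spectrum_nonsing_inv_mul_mul hC]

theorem Matrix.PosDef.transpose_mul_mul_same {A C : Matrix n n ℝ} (hA : A.PosDef)
    (hC : IsUnit C.det) : (Cᵀ * A * C).PosDef := by
  simpa only [conjTranspose_eq_transpose_of_trivial] using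
    hA.conjTranspose_mul_mul_same
      (mulVec_injective_iff_isUnit.mpr ((isUnit_iff_isUnit_det C).mpr hC))

theorem Matrix.posDef_transpose_mul_self_s2 {C : Matrix n n ℝ} (hC : IsUnit C.det) :
    (Cᵀ * C).PosDef := by
  simpa only [Matrix.mul_one] using PosDef.one.transpose_mul_mul_same hC

theorem Matrix.IsHermitian.smul_le_and_le_smul_of_spectrum_inv_mul {A B : Matrix n n ℝ}
    (hA : A.IsHermitian) (hB : B.PosDef) {a b : ℝ} (h : spectrum ℝ (B⁻¹ * A) ⊆ Icc a b) :
    a • B ≤ A ∧ A ≤ b • B := by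
  set P := CFC.sqrt B
  have hPP : P * P = B := CFC.sqrt_mul_sqrt_self B hB.posSemidef.nonneg
  have hP : IsSelfAdjoint P := (CFC.sqrt_nonneg B).isSelfAdjoint
  have hPdet : IsUnit P.det :=
    (isUnit_iff_isUnit_det P).mp (isUnit_of_mul_isUnit_left (hPP ▸ hB.isUnit))
  set M := P⁻¹ * A * P⁻¹
  have hM : IsSelfAdjoint M := by
    have hPinv : IsSelfAdjoint P⁻¹ := IsHermitian.inv hP
    simpa only [hPinv.star_eq] using IsSelfAdjoint.conjugate hA P⁻¹
  have hMspec : spectrum ℝ M ⊆ Icc a b := by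
    have hBA : B⁻¹ * A = P⁻¹ * M * P := by
      simp only [M, ← hPP, Matrix.mul_inv_rev, Matrix.mul_assoc, nonsing_inv_mul _ hPdet,
        Matrix.mul_one]
    rwa [hBA, spectrum_nonsing_inv_mul_mul hPdet] at h
  have hPMP : P * M * P = A := by
    simp only [M, ← Matrix.mul_assoc, mul_nonsing_inv _ hPdet, Matrix.one_mul]
    rw [Matrix.mul_assoc, nonsing_inv_mul _ hPdet, Matrix.mul_one]
  have hPcP (c : ℝ) : P * algebraMap ℝ _ c * P = c • B := by
    rw [Algebra.algebraMap_eq_smul_one, Matrix.mul_smul, Matrix.mul_one, Matrix.smul_mul, hPP]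
  rw [← hPMP, ← hPcP, ← hPcP]
  exact ⟨hP.conjugate_le_conjugate (algebraMap_le_of_le_spectrum (fun c hc ↦ (hMspec hc).1) hM),
    hP.conjugate_le_conjugate (le_algebraMap_of_spectrum_le (fun c hc ↦ (hMspec hc).2) hM)⟩

theorem Matrix.IsHermitian.dotProduct_mulVec_mem_Icc_of_spectrum_inv_mul
    {A B : Matrix n n ℝ} (hA : A.IsHermitian) (hB : B.PosDef) {a b : ℝ}
    (h : spectrum ℝ (B⁻¹ * A) ⊆ Icc a b) (x : n → ℝ) :
    x ⬝ᵥ A *ᵥ x ∈ Icc (a * (x ⬝ᵥ B *ᵥ x)) (b * (x ⬝ᵥ B *ᵥ x)) := by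
  obtain ⟨h₁, h₂⟩ := hA.smul_le_and_le_smul_of_spectrum_inv_mul hB h
  simpa only [mem_Icc, smul_mulVec, dotProduct_smul, smul_eq_mul] using
    And.intro (dotProduct_mulVec_le_dotProduct_mulVec h₁ x)
      (dotProduct_mulVec_le_dotProduct_mulVec h₂ x)

theorem Matrix.PosDef.dotProduct_transpose_mul_self_mulVec_mem_Icc {D C : Matrix n n ℝ}
    (hD : D.PosDef) {a b : ℝ} (hDspec : spectrum ℝ D ⊆ Icc a b) (hC : IsUnit C.det)
    (x : n → ℝ) :
    x ⬝ᵥ (Cᵀ * C) *ᵥ x ∈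
      Icc (a * (x ⬝ᵥ (Cᵀ * D⁻¹ * C) *ᵥ x)) (b * (x ⬝ᵥ (Cᵀ * D⁻¹ * C) *ᵥ x)) :=
  (posDef_transpose_mul_self_s2 hC).1.dotProduct_mulVec_mem_Icc_of_spectrum_inv_mul
    (hD.inv.transpose_mul_mul_same hC) (by
      rwa [spectrum_inv_transpose_mul_inv_mul_mul_transpose_mul
        ((isUnit_iff_isUnit_det D).mp hD.isUnit) hC]) x

theorem Matrix.PosDef.dotProduct_transpose_mul_inv_mul_mulVec_mem_Icc {D L Lhat : Matrix n n ℝ}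
    (hD : D.PosDef) {dmin dmax : ℝ} (hdmin : 0 < dmin) (hdmax : 0 < dmax)
    (hDspec : spectrum ℝ D ⊆ Icc dmin dmax) (hL : IsUnit L.det) (hLhat : IsUnit Lhat.det)
    {lL LL : ℝ} (hlL : 0 ≤ lL) (hLL : 0 ≤ LL)
    (hLspec : spectrum ℝ ((Lhatᵀ * Lhat)⁻¹ * (Lᵀ * L)) ⊆ Icc lL LL) (x : n → ℝ) :
    x ⬝ᵥ (Lᵀ * D⁻¹ * L) *ᵥ x ∈
      Icc (lL * dmin / dmax * (x ⬝ᵥ (Lhatᵀ * D⁻¹ * Lhat) *ᵥ x))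
        (LL * dmax / dmin * (x ⬝ᵥ (Lhatᵀ * D⁻¹ * Lhat) *ᵥ x)) := by
  obtain ⟨hL₁, hL₂⟩ :=
    (posDef_transpose_mul_self_s2 hL).1.dotProduct_mulVec_mem_Icc_of_spectrum_inv_mul
      (posDef_transpose_mul_self_s2 hLhat) hLspec x
  obtain ⟨hD₁, hD₂⟩ := hD.dotProduct_transpose_mul_self_mulVec_mem_Icc hDspec hL x
  obtain ⟨hDh₁, hDh₂⟩ := hD.dotProduct_transpose_mul_self_mulVec_mem_Icc hDspec hLhat x
  set t := x ⬝ᵥ (Lᵀ * D⁻¹ * L) *ᵥ x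
  set th := x ⬝ᵥ (Lhatᵀ * D⁻¹ * Lhat) *ᵥ x
  set p := x ⬝ᵥ (Lᵀ * L) *ᵥ x
  set ph := x ⬝ᵥ (Lhatᵀ * Lhat) *ᵥ x
  constructor
  · calc lL * dmin / dmax * th = lL * (dmin * th) / dmax := by ring
      _ ≤ lL * ph / dmax := by gcongr
      _ ≤ p / dmax := by gcongr
      _ ≤ t := by rw [div_le_iff₀ hdmax]; linarith
  · calc t ≤ p / dmin := by rw [le_div_iff₀ hdmin]; linarith
      _ ≤ LL * ph / dmin := by gcongr
      _ ≤ LL * (dmax * th) / dmin := by gcongr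
      _ = LL * dmax / dmin * th := by ring

theorem schur_complement_rayleigh_quotient_bounds_general
    (m q : ℕ)
    (D : Matrix (Fin m) (Fin m) ℝ) (R : Matrix (Fin q) (Fin q) ℝ)
    (L Lhat : Matrix (Fin m) (Fin m) ℝ) (H : Matrix (Fin q) (Fin m) ℝ)
    (hD : D.PosDef) (hR : R.PosDef)
    (hL : IsUnit L.det) (hLhat : IsUnit Lhat.det)
    (S Stilde Shat : Matrix (Fin m) (Fin m) ℝ)
    (hSdef : S = Lᵀ * D⁻¹ * L + Hᵀ * R⁻¹ * H)
    (hStdef : Stilde = Lᵀ * D⁻¹ * L)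
    (hShdef : Shat = Lhatᵀ * D⁻¹ * Lhat)
    (lS LS lL LL : ℝ)
    (hlS : 0 < lS) (hLS : 0 < LS) (hlL : 0 < lL) (hLL : 0 < LL)
    -- every eigenvalue of S̃⁻¹S lies in [lS, LS]
    (hSint : ∀ (μ : ℝ) (v : Fin m → ℝ), v ≠ 0 → (Stilde⁻¹ * S) *ᵥ v = μ • v →
      μ ∈ Icc lS LS)
    -- every eigenvalue of (L̂ᵀL̂)⁻¹(LᵀL) lies in [lL, LL]
    (hLint : ∀ (μ : ℝ) (v : Fin m → ℝ), v ≠ 0 →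
      ((Lhatᵀ * Lhat)⁻¹ * (Lᵀ * L)) *ᵥ v = μ • v → μ ∈ Icc lL LL)
    -- extreme eigenvalues of D and its spectral condition number
    (dmin dmax : ℝ)
    (hdmin : IsLeast {μ : ℝ | ∃ v : Fin m → ℝ, v ≠ 0 ∧ D *ᵥ v = μ • v} dmin)
    (hdmax : IsGreatest {μ : ℝ | ∃ v : Fin m → ℝ, v ≠ 0 ∧ D *ᵥ v = μ • v} dmax)
    (κD : ℝ) (hκD : κD = dmax / dmin) :
    ∀ x : Fin m → ℝ, x ≠ 0 →
      (x ⬝ᵥ (S *ᵥ x)) / (x ⬝ᵥ (Shat *ᵥ x)) ∈ Icc (lS * lL / κD) (LS * LL * κD) := by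
  intro x hx
  have hSt : Stilde.PosDef := hStdef ▸ hD.inv.transpose_mul_mul_same hL
  have hSh : Shat.PosDef := hShdef ▸ hD.inv.transpose_mul_mul_same hLhat
  have hS : S.IsHermitian := by
    rw [hSdef, ← hStdef]
    simpa only [conjTranspose_eq_transpose_of_trivial] using
      hSt.1.add (isHermitian_conjTranspose_mul_mul H hR.inv.1)
  have hDspec : spectrum ℝ D ⊆ Icc dmin dmax := spectrum_subset_of_mulVec_eq_smul
    fun μ v hv h ↦ ⟨hdmin.2 ⟨v, hv, h⟩, hdmax.2 ⟨v, hv, h⟩⟩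
  have hdmin_pos : 0 < dmin := by
    obtain ⟨v, hv, h⟩ := hdmin.1
    exact hD.pos_of_mulVec_eq_smul_s2 hv h
  have hdmax_pos : 0 < dmax := hdmin_pos.trans_le (hdmin.2 hdmax.1)
  obtain ⟨hS₁, hS₂⟩ :=
    hS.dotProduct_mulVec_mem_Icc_of_spectrum_inv_mul hSt (spectrum_subset_of_mulVec_eq_smul hSint) x
  obtain ⟨hSt₁, hSt₂⟩ := hD.dotProduct_transpose_mul_inv_mul_mulVec_mem_Icc hdmin_pos
    hdmax_pos hDspec hL hLhat hlL.le hLL.le (spectrum_subset_of_mulVec_eq_smul hLint) x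
  rw [← hStdef, ← hShdef] at hSt₁ hSt₂
  have hsh : 0 < x ⬝ᵥ Shat *ᵥ x := by
    simpa only [star_trivial] using hSh.dotProduct_mulVec_pos hx
  subst hκD
  constructor
  · rw [le_div_iff₀ hsh]
    calc lS * lL / (dmax / dmin) * (x ⬝ᵥ Shat *ᵥ x)
        = lS * (lL * dmin / dmax * (x ⬝ᵥ Shat *ᵥ x)) := by field_simp
      _ ≤ lS * (x ⬝ᵥ Stilde *ᵥ x) := by gcongr
      _ ≤ x ⬝ᵥ S *ᵥ x := hS₁
  · rw [div_le_iff₀ hsh]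
    calc x ⬝ᵥ S *ᵥ x ≤ LS * (x ⬝ᵥ Stilde *ᵥ x) := hS₂
      _ ≤ LS * (LL * dmax / dmin * (x ⬝ᵥ Shat *ᵥ x)) := by gcongr
      _ = LS * LL * (dmax / dmin) * (x ⬝ᵥ Shat *ᵥ x) := by ring

/-- Bound on the Rayleigh quotient xᵀSx / xᵀŜx in terms of the eigenvalue
intervals of S̃⁻¹S and (L̂ᵀL̂)⁻¹(LᵀL) and the condition number of D. -/
theorem schur_complement_rayleigh_quotient_bounds
    (m q : ℕ) (hm : 0 < m) (hq : 0 < q)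
    (D : Matrix (Fin m) (Fin m) ℝ) (R : Matrix (Fin q) (Fin q) ℝ)
    (L Lhat : Matrix (Fin m) (Fin m) ℝ) (H : Matrix (Fin q) (Fin m) ℝ)
    (hD : D.PosDef) (hR : R.PosDef)
    (hL : IsUnit L.det) (hLhat : IsUnit Lhat.det)
    (S Stilde Shat : Matrix (Fin m) (Fin m) ℝ)
    (hSdef : S = Lᵀ * D⁻¹ * L + Hᵀ * R⁻¹ * H)
    (hStdef : Stilde = Lᵀ * D⁻¹ * L)
    (hShdef : Shat = Lhatᵀ * D⁻¹ * Lhat)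
    (lS LS lL LL : ℝ)
    (hlS : 0 < lS) (hLS : 0 < LS) (hlL : 0 < lL) (hLL : 0 < LL)
    -- every eigenvalue of S̃⁻¹S lies in [lS, LS]
    (hSint : ∀ (μ : ℝ) (v : Fin m → ℝ), v ≠ 0 → (Stilde⁻¹ * S) *ᵥ v = μ • v →
      μ ∈ Icc lS LS)
    -- every eigenvalue of (L̂ᵀL̂)⁻¹(LᵀL) lies in [lL, LL]
    (hLint : ∀ (μ : ℝ) (v : Fin m → ℝ), v ≠ 0 →
      ((Lhatᵀ * Lhat)⁻¹ * (Lᵀ * L)) *ᵥ v = μ • v → μ ∈ Icc lL LL)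
    -- extreme eigenvalues of D and its spectral condition number
    (dmin dmax : ℝ)
    (hdmin : IsLeast {μ : ℝ | ∃ v : Fin m → ℝ, v ≠ 0 ∧ D *ᵥ v = μ • v} dmin)
    (hdmax : IsGreatest {μ : ℝ | ∃ v : Fin m → ℝ, v ≠ 0 ∧ D *ᵥ v = μ • v} dmax)
    (κD : ℝ) (hκD : κD = dmax / dmin) :
    ∀ x : Fin m → ℝ, x ≠ 0 →
      (x ⬝ᵥ (S *ᵥ x)) / (x ⬝ᵥ (Shat *ᵥ x)) ∈ Icc (lS * lL / κD) (LS * LL * κD) :=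
  schur_complement_rayleigh_quotient_bounds_general m q D R L Lhat H hD hR hL hLhat S Stilde Shat
    hSdef hStdef hShdef lS LS lL LL hlS hLS hlL hLL hSint hLint dmin dmax hdmin hdmax κD hκD
end

section
/- Let s, N ≥ 1 and let k be an integer with 1 ≤ k ≤ N+1. Let M_1, …, M_N ∈ ℝ^{s×s}. Let L ∈ ℝ^{(N+1)s×(N+1)s} be the block lower bidiagonal matrix with identity s×s blocks on the diagonal and blocks −M_i (for i = 1, …, N) on the first subdiagonal, and let L_M = L_M(k) be the block matrix whose (i,j)th block equals the identity I if i = j, equals −M_j if i = j+1 and j is not divisible by k, and equals the zero matrix otherwise. Define A(M) ∈ ℝ^{(N+1)s×(N+1)s} blockwise as follows: for each n = 1, …, ⌊N/k⌋, the (i,j)th block of A(M) equals (∏_{t=i}^{nk} M_tᵀ)(∏_{q=j}^{nk} M_{nk−q+j}) when (n−1)k+1 ≤ i, j ≤ nk; equals −∏_{t=j}^{nk} M_{nk−t+j} when i = nk+1 and (n−1)k+1 ≤ j ≤ nk; equals −∏_{t=i}^{nk} M_tᵀ when j = nk+1 and (n−1)k+1 ≤ i ≤ nk; and all blocks not covered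 by these cases equal zero. Then L_M is invertible and L_M⁻ᵀ Lᵀ L L_M⁻¹ = I + A(M); equivalently, Lᵀ L = L_Mᵀ (I + A(M)) L_M. -/
open Matrix

/-- The product `M_a * M_{a-1} * ⋯ * M_b` (factors in decreasing index order from
left to right); equal to the identity when `b > a`. -/
def descProd {s : ℕ} (M : ℕ → Matrix (Fin s) (Fin s) ℝ) (a b : ℕ) :
    Matrix (Fin s) (Fin s) ℝ :=
  (((List.range (a + 1 - b)).map fun t => M (a - t))).prod

/-- The block lower bidiagonal matrix `L` with identity diagonal blocks and blocks
`−M_j` in position `(j+1, j)` (1-based block indices `1, …, N+1`). -/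
def Lmat (s N : ℕ) (M : ℕ → Matrix (Fin s) (Fin s) ℝ) :
    Matrix (Fin (N + 1) × Fin s) (Fin (N + 1) × Fin s) ℝ :=
  Matrix.of fun p q =>
    if p.1 = q.1 then (if p.2 = q.2 then 1 else 0)
    else if (p.1 : ℕ) = (q.1 : ℕ) + 1 then -(M ((q.1 : ℕ) + 1) p.2 q.2)
    else 0

/-- The block matrix `L_M(k)`: the `(i,j)`th block (1-based) is `I` if `i = j`,
`−M_j` if `i = j + 1` and `k ∤ j`, and `0` otherwise. -/
def LMmat (s N k : ℕ) (M : ℕ → Matrix (Fin s) (Fin s) ℝ) :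
    Matrix (Fin (N + 1) × Fin s) (Fin (N + 1) × Fin s) ℝ :=
  Matrix.of fun p q =>
    if p.1 = q.1 then (if p.2 = q.2 then 1 else 0)
    else if (p.1 : ℕ) = (q.1 : ℕ) + 1 ∧ ¬ k ∣ ((q.1 : ℕ) + 1) then
      -(M ((q.1 : ℕ) + 1) p.2 q.2)
    else 0

/-- The contribution to `A(M)` from index `n`, as a function of the 1-based block
indices `i, j`: using `∏_{t=i}^{nk} M_tᵀ = (M_{nk} ⋯ M_i)ᵀ` and
`∏_{q=j}^{nk} M_{nk−q+j} = M_{nk} ⋯ M_j`. -/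
def Ablock {s : ℕ} (k : ℕ) (M : ℕ → Matrix (Fin s) (Fin s) ℝ) (n i j : ℕ) :
    Matrix (Fin s) (Fin s) ℝ :=
  if (n - 1) * k + 1 ≤ i ∧ i ≤ n * k ∧ (n - 1) * k + 1 ≤ j ∧ j ≤ n * k then
    (descProd M (n * k) i)ᵀ * descProd M (n * k) j
  else if i = n * k + 1 ∧ (n - 1) * k + 1 ≤ j ∧ j ≤ n * k then
    -(descProd M (n * k) j)
  else if j = n * k + 1 ∧ (n - 1) * k + 1 ≤ i ∧ i ≤ n * k then
    -((descProd M (n * k) i)ᵀ)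
  else 0

/-- The matrix `A(M)`, assembled from the blocks for `n = 1, …, ⌊N/k⌋` (all blocks
not covered by the cases of `Ablock` are zero). -/
def AMmat (s N k : ℕ) (M : ℕ → Matrix (Fin s) (Fin s) ℝ) :
    Matrix (Fin (N + 1) × Fin s) (Fin (N + 1) × Fin s) ℝ :=
  ∑ n ∈ Finset.Icc 1 (N / k),
    Matrix.of fun p q => Ablock k M n ((p.1 : ℕ) + 1) ((q.1 : ℕ) + 1) p.2 q.2

/-!
Let `G` be the block matrix whose only nonzero blocks are `G_{nk, j} = -M_{nk} ⋯ M_{j+1}` for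
`(n - 1) k ≤ j < nk` (0-based block indices). The telescoping identity
`(M_{nk} ⋯ M_{j+2}) M_{j+1} = M_{nk} ⋯ M_{j+1}` gives `G L_M = L - L_M`, i.e. `L = (I + G) L_M`,
so `L_M⁻ᵀ Lᵀ L L_M⁻¹ = (I + G)ᵀ (I + G) = I + G + Gᵀ + GᵀG`. Distinct rows `nk` of `G` never meet
in `GᵀG`, so the `n`-th summand of `A(M)` is exactly the contribution of row `nk` of `G`.
Finally `L_M` is block unit lower triangular, so `det L_M = 1`.
-/

namespace LMPrecond

open Finset

/-- For the 1-based index `j + 1` in the `n`-th segment `(n - 1) k < j + 1 ≤ n k`,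
this is `n k`. -/
def segmentEnd (k j : ℕ) : ℕ := (j / k + 1) * k

section segmentEnd

variable {k : ℕ}

theorem dvd_segmentEnd (j : ℕ) : k ∣ segmentEnd k j := dvd_mul_left k _

theorem lt_segmentEnd (hk : 0 < k) (j : ℕ) : j < segmentEnd k j := by
  have := Nat.lt_div_mul_add (a := j) hk
  unfold segmentEnd
  linarith [add_one_mul (j / k) k]

theorem segmentEnd_of_dvd {j : ℕ} (h : k ∣ j + 1) : segmentEnd k j = j + 1 := by
  rw [segmentEnd, ← Nat.succ_div_of_dvd h, Nat.div_mul_cancel h]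

theorem segmentEnd_succ_of_not_dvd {j : ℕ} (h : ¬ k ∣ j + 1) :
    segmentEnd k (j + 1) = segmentEnd k j := by
  rw [segmentEnd, segmentEnd, Nat.succ_div_of_not_dvd h]

theorem segmentEnd_eq_mul_iff (hk : 0 < k) {n j : ℕ} (hn : 1 ≤ n) :
    segmentEnd k j = n * k ↔ (n - 1) * k + 1 ≤ j + 1 ∧ j + 1 ≤ n * k := by
  obtain ⟨m, rfl⟩ : ∃ m, n = m + 1 := ⟨n - 1, by omega⟩
  rw [segmentEnd, Nat.mul_left_inj hk.ne', add_left_inj, Nat.div_eq_iff hk, add_one_mul]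
  simp only [add_tsub_cancel_right]
  omega

theorem sum_Icc_mul_eq_sum_range {X : Type*} [AddCommMonoid X] (hk : 0 < k) (N : ℕ)
    (f : ℕ → X) (hf : ∀ t, ¬ (k ∣ t ∧ 0 < t) → f t = 0) :
    ∑ n ∈ Icc 1 (N / k), f (n * k) = ∑ t ∈ range (N + 1), f t := by
  rw [← sum_image fun a _ b _ h => Nat.eq_of_mul_eq_mul_right hk h]
  refine sum_subset (fun t ht => ?_) fun t ht hti => hf t fun ⟨⟨c, hc⟩, ht0⟩ => hti ?_
  · obtain ⟨n, hn, rfl⟩ := mem_image.1 ht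
    exact mem_range.2 (Nat.lt_succ_of_le ((Nat.le_div_iff_mul_le hk).1 (mem_Icc.1 hn).2))
  · subst hc
    rw [mul_comm] at ht ht0 ⊢
    refine mem_image.2 ⟨c, mem_Icc.2 ⟨Nat.pos_of_mul_pos_right ht0, ?_⟩, rfl⟩
    exact (Nat.le_div_iff_mul_le hk).2 (Nat.lt_succ_iff.1 (mem_range.1 ht))

end segmentEnd

theorem descProd_self {s : ℕ} (M : ℕ → Matrix (Fin s) (Fin s) ℝ) (a : ℕ) :
    descProd M a a = M a := by
  simp [descProd, List.range_one]

theorem descProd_succ_mul {s : ℕ} (M : ℕ → Matrix (Fin s) (Fin s) ℝ) {a b : ℕ} (h : b ≤ a) :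
    descProd M a (b + 1) * M b = descProd M a b := by
  rw [descProd, descProd, show a + 1 - b = a + 1 - (b + 1) + 1 by omega, List.range_succ,
    List.map_append, List.prod_append]
  simp [show a - (a - b) = b by omega]

def blockMatrix {R : Type*} (N : ℕ) (f : ℕ → ℕ → R) : Matrix (Fin (N + 1)) (Fin (N + 1)) R :=
  of fun i j => f i j

section blockMatrix

variable {R : Type*} {N : ℕ}

theorem blockMatrix_mul [NonUnitalNonAssocSemiring R] (f g : ℕ → ℕ → R) :
    blockMatrix N f * blockMatrix N g =
      blockMatrix N fun i j => ∑ t ∈ range (N + 1), f i t * g t j := by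
  ext1 i j
  exact Fin.sum_univ_eq_sum_range (fun t => f i t * g t j) _

theorem conjTranspose_blockMatrix [Star R] (f : ℕ → ℕ → R) :
    (blockMatrix N f)ᴴ = blockMatrix N fun i j => star (f j i) :=
  rfl

end blockMatrix

theorem transpose_comp_eq_comp_conjTranspose {I J K R : Type*} [Star R] [TrivialStar R]
    (X : Matrix I J (Matrix K K R)) : (comp I J K K R X)ᵀ = comp J I K K R Xᴴ := by
  ext
  simp

theorem transpose_comp_one_add_mul_self {I K R : Type*} [Fintype I] [DecidableEq I] [Fintype K]
    [DecidableEq K] [CommRing R] [StarRing R] [TrivialStar R] (G : Matrix I I (Matrix K K R)) :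
    (comp I I K K R (1 + G))ᵀ * comp I I K K R (1 + G) = 1 + comp I I K K R (G + Gᴴ + Gᴴ * G) := by
  have hG : (1 + G)ᴴ * (1 + G) = 1 + (G + Gᴴ + Gᴴ * G) := by
    rw [conjTranspose_add, conjTranspose_one]
    noncomm_ring
  rw [transpose_comp_eq_comp_conjTranspose, ← compRingEquiv_apply, ← compRingEquiv_apply,
    ← map_mul, hG, map_add, map_one, compRingEquiv_apply]

theorem inv_transpose_mul_transpose_mul_mul_inv {n R : Type*} [Fintype n] [DecidableEq n]
    [CommRing R] {B : Matrix n n R} (hB : IsUnit B.det) (P : Matrix n n R) :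
    (B⁻¹)ᵀ * (P * B)ᵀ * (P * B) * B⁻¹ = Pᵀ * P := by
  have hBB : B * B⁻¹ = 1 := mul_nonsing_inv B hB
  have hBBt : (B⁻¹)ᵀ * Bᵀ = 1 := by rw [← transpose_mul, hBB, transpose_one]
  calc (B⁻¹)ᵀ * (P * B)ᵀ * (P * B) * B⁻¹ = ((B⁻¹)ᵀ * Bᵀ) * (Pᵀ * P) * (B * B⁻¹) := by
        simp only [transpose_mul, Matrix.mul_assoc]
    _ = Pᵀ * P := by rw [hBB, hBBt, Matrix.one_mul, Matrix.mul_one]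

section blocks

variable {s : ℕ} (k : ℕ) (M : ℕ → Matrix (Fin s) (Fin s) ℝ)

def Lblock (i j : ℕ) : Matrix (Fin s) (Fin s) ℝ :=
  if i = j then 1 else if i = j + 1 then -M (j + 1) else 0

def LMblock (i j : ℕ) : Matrix (Fin s) (Fin s) ℝ :=
  if i = j then 1 else if i = j + 1 ∧ ¬ k ∣ j + 1 then -M (j + 1) else 0

def Gblock (p j : ℕ) : Matrix (Fin s) (Fin s) ℝ :=
  if p = segmentEnd k j then -descProd M p (j + 1) else 0

theorem Lmat_eq_comp (N : ℕ) : Lmat s N M = comp _ _ _ _ ℝ (blockMatrix N (Lblock M)) := by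
  ext ⟨i, a⟩ ⟨j, b⟩
  simp only [Lmat, Lblock, blockMatrix, comp_apply, of_apply, Fin.val_inj]
  split_ifs <;> simp [one_apply, *]

theorem LMmat_eq_comp (N : ℕ) :
    LMmat s N k M = comp _ _ _ _ ℝ (blockMatrix N (LMblock k M)) := by
  ext ⟨i, a⟩ ⟨j, b⟩
  simp only [LMmat, LMblock, blockMatrix, comp_apply, of_apply, Fin.val_inj]
  split_ifs <;> simp [one_apply, *]

theorem det_LMmat (N : ℕ) : (LMmat s N k M).det = 1 := by
  have hB : (blockMatrix N (LMblock k M)).BlockTriangular OrderDual.toDual := fun i j hij => by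
    have hij : (i : ℕ) < j := hij
    simp [blockMatrix, LMblock, hij.ne, show (i : ℕ) ≠ j + 1 by omega]
  rw [LMmat_eq_comp, hB.comp.det_fintype]
  refine prod_eq_one fun a _ => (congrArg det ?_).trans det_one
  ext ⟨⟨p, x⟩, hp⟩ ⟨⟨q, y⟩, hq⟩
  obtain rfl : p = q := hp.trans hq.symm
  simp [toSquareBlock_def, blockMatrix, LMblock, one_apply]

variable {k M}

theorem Gblock_eq_zero_of_not_dvd (hk : 0 < k) {p : ℕ} (hp : ¬ (k ∣ p ∧ 0 < p)) (j : ℕ) :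
    Gblock k M p j = 0 := by
  refine if_neg fun h => hp ?_
  exact h ▸ ⟨dvd_segmentEnd j, (Nat.zero_le j).trans_lt (lt_segmentEnd hk j)⟩

theorem Gblock_eq_zero_of_le (hk : 0 < k) {p j : ℕ} (h : p ≤ j) : Gblock k M p j = 0 := by
  refine if_neg fun hp => ?_
  exact (lt_segmentEnd hk j).not_ge (hp ▸ h)

theorem Gblock_of_dvd {j : ℕ} (h : k ∣ j + 1) (p : ℕ) :
    Gblock k M p j = if p = j + 1 then -M (j + 1) else 0 := by
  rw [Gblock, segmentEnd_of_dvd h]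
  split_ifs with hp
  · rw [hp, descProd_self]
  · rfl

theorem Gblock_eq_mul_of_not_dvd (hk : 0 < k) {j : ℕ} (h : ¬ k ∣ j + 1) (p : ℕ) :
    Gblock k M p j = Gblock k M p (j + 1) * M (j + 1) := by
  have hlt := lt_segmentEnd hk (j + 1)
  rw [segmentEnd_succ_of_not_dvd h] at hlt
  rw [Gblock, Gblock, segmentEnd_succ_of_not_dvd h]
  split_ifs with hp
  · rw [neg_mul, descProd_succ_mul M (by omega)]
  · rw [zero_mul]

theorem sum_Gblock_mul_LMblock (hk : 0 < k) {N p r : ℕ} (hp : p ≤ N) (hr : r ≤ N) :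
    ∑ t ∈ range (N + 1), Gblock k M p t * LMblock k M t r = Lblock M p r - LMblock k M p r := by
  rw [sum_eq_add r (r + 1) (by omega)]
  · have hsub : LMblock k M (r + 1) r = if k ∣ r + 1 then 0 else -M (r + 1) := by
      simp [LMblock, ite_not]
    rw [hsub, LMblock, if_pos rfl, mul_one]
    by_cases hdvd : k ∣ r + 1
    · rw [if_pos hdvd, mul_zero, add_zero, Gblock_of_dvd hdvd]
      by_cases hpr : p = r + 1 <;> simp [Lblock, LMblock, hpr, hdvd]
    · rw [if_neg hdvd, Gblock_eq_mul_of_not_dvd hk hdvd, mul_neg, add_neg_cancel]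
      by_cases hpr : p = r + 1 <;> simp [Lblock, LMblock, hpr, hdvd]
  · intro t _ ht
    simp [LMblock, ht.1, ht.2]
  · intro h
    exact absurd (mem_range.2 (by omega)) h
  · intro h
    rw [Gblock_eq_zero_of_le hk (by rw [mem_range] at h; omega), zero_mul]

theorem Lmat_eq_mul_LMmat (hk : 0 < k) (N : ℕ) :
    Lmat s N M = comp _ _ _ _ ℝ (1 + blockMatrix N (Gblock k M)) * LMmat s N k M := by
  have hGL : blockMatrix N (Gblock k M) * blockMatrix N (LMblock k M) =
      blockMatrix N (Lblock M) - blockMatrix N (LMblock k M) := by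
    rw [blockMatrix_mul]
    ext1 i r
    exact sum_Gblock_mul_LMblock hk i.is_le r.is_le
  rw [Lmat_eq_comp, LMmat_eq_comp, ← compRingEquiv_apply, ← compRingEquiv_apply,
    ← compRingEquiv_apply, ← map_mul, add_mul, one_mul, hGL, add_sub_cancel]

-- `Gblock k M (n * k) i` vanishes unless `i` lies in the `n`-th segment, so the product term
-- needs no guard.
theorem Ablock_succ_succ (hk : 0 < k) {n : ℕ} (hn : 1 ≤ n) (i j : ℕ) :
    Ablock k M n (i + 1) (j + 1) =
      (Gblock k M (n * k) i)ᵀ * Gblock k M (n * k) j +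
        (if i = n * k then Gblock k M i j else 0) +
        (if j = n * k then (Gblock k M j i)ᵀ else 0) := by
  have hi := segmentEnd_eq_mul_iff hk hn (j := i)
  have hj := segmentEnd_eq_mul_iff hk hn (j := j)
  have hilt := lt_segmentEnd hk i
  have hjlt := lt_segmentEnd hk j
  have hA : Ablock k M n (i + 1) (j + 1) =
      if segmentEnd k i = n * k ∧ segmentEnd k j = n * k then
        (descProd M (n * k) (i + 1))ᵀ * descProd M (n * k) (j + 1)
      else if i = n * k ∧ segmentEnd k j = n * k then -descProd M (n * k) (j + 1)
      else if j = n * k ∧ segmentEnd k i = n * k then -(descProd M (n * k) (i + 1))ᵀ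
      else 0 := by
    unfold Ablock
    refine if_congr ?_ rfl (if_congr ?_ rfl (if_congr ?_ rfl rfl)) <;> simp only [hi, hj] <;> omega
  rw [hA]
  unfold Gblock
  by_cases hI : segmentEnd k i = n * k <;> by_cases hJ : segmentEnd k j = n * k
  · simp [hI, hJ, show i ≠ n * k by omega, show j ≠ n * k by omega]
  · simp [hI, hJ, Ne.symm hJ, show i ≠ n * k by omega]
    split_ifs with hjn
    · simp [hjn]
    · rfl
  · simp +contextual [hI, hJ, Ne.symm hI, show j ≠ n * k by omega]
  · simp +contextual [hI, hJ, Ne.symm hI, Ne.symm hJ]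

theorem sum_Ablock (hk : 0 < k) {N i j : ℕ} (hi : i ≤ N) (hj : j ≤ N) :
    ∑ n ∈ Icc 1 (N / k), Ablock k M n (i + 1) (j + 1) =
      Gblock k M i j + (Gblock k M j i)ᵀ +
        ∑ t ∈ range (N + 1), (Gblock k M t i)ᵀ * Gblock k M t j := by
  rw [sum_congr rfl fun n hn => Ablock_succ_succ hk (mem_Icc.1 hn).1 i j, sum_add_distrib,
    sum_add_distrib,
    sum_Icc_mul_eq_sum_range hk N (fun t => (Gblock k M t i)ᵀ * Gblock k M t j) fun t ht => by
      rw [Gblock_eq_zero_of_not_dvd hk ht, transpose_zero, zero_mul],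
    sum_Icc_mul_eq_sum_range hk N (fun t => if i = t then Gblock k M i j else 0) fun t ht => by
      split_ifs with h
      · rw [h, Gblock_eq_zero_of_not_dvd hk ht]
      · rfl,
    sum_Icc_mul_eq_sum_range hk N (fun t => if j = t then (Gblock k M j i)ᵀ else 0) fun t ht => by
      split_ifs with h
      · rw [h, Gblock_eq_zero_of_not_dvd hk ht, transpose_zero]
      · rfl,
    sum_ite_eq, sum_ite_eq, if_pos (mem_range.2 (by omega)), if_pos (mem_range.2 (by omega))]
  abel

theorem AMmat_eq_comp (hk : 0 < k) (N : ℕ) :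
    AMmat s N k M = comp _ _ _ _ ℝ (blockMatrix N (Gblock k M) + (blockMatrix N (Gblock k M))ᴴ +
      (blockMatrix N (Gblock k M))ᴴ * blockMatrix N (Gblock k M)) := by
  rw [conjTranspose_blockMatrix, blockMatrix_mul]
  ext ⟨i, a⟩ ⟨j, b⟩
  simp only [AMmat, Matrix.sum_apply, of_apply, comp_apply]
  rw [← Matrix.sum_apply, sum_Ablock hk i.is_le j.is_le]
  simp [blockMatrix, star_eq_conjTranspose]

end blocks

end LMPrecond

open LMPrecond in
theorem LM_preconditioned_normal_matrix_general (s N k : ℕ)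
    (hk1 : 1 ≤ k)
    (M : ℕ → Matrix (Fin s) (Fin s) ℝ) :
    IsUnit (LMmat s N k M).det ∧
      ((LMmat s N k M)⁻¹)ᵀ * (Lmat s N M)ᵀ * Lmat s N M * (LMmat s N k M)⁻¹
        = 1 + AMmat s N k M := by
  have hdet : IsUnit (LMmat s N k M).det := by
    rw [det_LMmat]
    exact isUnit_one
  refine ⟨hdet, ?_⟩
  rw [Lmat_eq_mul_LMmat hk1 N, inv_transpose_mul_transpose_mul_mul_inv hdet,
    transpose_comp_one_add_mul_self, AMmat_eq_comp hk1]

/-- Lemma 4.3: `L_M` is invertible and `L_M⁻ᵀ Lᵀ L L_M⁻¹ = I + A(M)`. -/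
theorem LM_preconditioned_normal_matrix (s N k : ℕ) (hs : 1 ≤ s) (hN : 1 ≤ N)
    (hk1 : 1 ≤ k) (hk2 : k ≤ N + 1)
    (M : ℕ → Matrix (Fin s) (Fin s) ℝ) :
    IsUnit (LMmat s N k M).det ∧
      ((LMmat s N k M)⁻¹)ᵀ * (Lmat s N M)ᵀ * Lmat s N M * (LMmat s N k M)⁻¹
        = 1 + AMmat s N k M :=
  LM_preconditioned_normal_matrix_general s N k hk1 M
end

section
/- Let s, N ≥ 1 and let k be an integer with 2 ≤ k ≤ N+1. Let M_1, …, M_N ∈ ℝ^{s×s}. Let L ∈ ℝ^{(N+1)s×(N+1)s} be the block lower bidiagonal matrix with identity s×s blocks on the diagonal and blocks −M_i (for i = 1, …, N) on the first subdiagonal, and let L_M = L_M(k) be the block matrix whose (i,j)th block equals the identity I if i = j, equals −M_j if i = j+1 and j is not divisible by k, and equals the zero matrix otherwise. Set r = N + 1 − 2⌊N/k⌋. Then the symmetric matrix L_M⁻ᵀ Lᵀ L L_M⁻¹ has the eigenvalue 1 with multiplicity at least rs; that is, the eigenspace { v : L_M⁻ᵀ Lᵀ L L_M⁻¹ v = v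 } has dimension at least rs. -/
/-
The `1`-eigenspace of `(L L_M⁻¹)ᵀ (L L_M⁻¹)` is what survives of the identity under a
low-rank perturbation: `L L_M⁻¹ = 1 + E` with `E = (L - L_M) L_M⁻¹`, and every vector killed
by both `E` and `Eᵀ` is fixed by `(1 + E)ᵀ (1 + E)`. Hence the eigenspace has dimension at least
`(N + 1) s - 2 rank (L - L_M)`, and `L - L_M` is supported on the `⌊N/k⌋ s` columns of the
blocks `j` with `k ∣ j`, where `L` keeps the subdiagonal block that `L_M` drops.
-/
open Matrix

open Module LinearMap

theorem LinearMap.finrank_sub_finrank_range_sub_finrank_range_le_finrank_ker_inf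
    {K V W₁ W₂ : Type*} [DivisionRing K] [AddCommGroup V] [Module K V] [FiniteDimensional K V]
    [AddCommGroup W₁] [Module K W₁] [AddCommGroup W₂] [Module K W₂]
    (f : V →ₗ[K] W₁) (g : V →ₗ[K] W₂) :
    finrank K V - finrank K (range f) - finrank K (range g) ≤ finrank K ↥(ker f ⊓ ker g) := by
  have hf := f.finrank_range_add_finrank_ker
  have hg := g.finrank_range_add_finrank_ker
  have hsup := Submodule.finrank_le (ker f ⊔ ker g)
  have hsup_inf := Submodule.finrank_sup_add_finrank_inf_eq (ker f) (ker g)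
  omega

namespace Matrix

variable {K n : Type*} [Field K] [Fintype n]

theorem card_sub_rank_sub_rank_le_finrank_ker_inf {m₁ m₂ : Type*} [Fintype m₁] [Fintype m₂]
    (A : Matrix m₁ n K) (B : Matrix m₂ n K) :
    Fintype.card n - A.rank - B.rank ≤ finrank K ↥(ker A.mulVecLin ⊓ ker B.mulVecLin) := by
  simpa only [rank, finrank_fintype_fun_eq_card] using
    A.mulVecLin.finrank_sub_finrank_range_sub_finrank_range_le_finrank_ker_inf B.mulVecLin

theorem ker_inf_ker_transpose_le_eigenspace_one [DecidableEq n] {R : Type*} [CommRing R]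
    (E : Matrix n n R) :
    ker E.mulVecLin ⊓ ker Eᵀ.mulVecLin ≤
      Module.End.eigenspace (toLin' ((1 + E)ᵀ * (1 + E))) 1 := by
  rintro v ⟨hE, hEt⟩
  simp only [SetLike.mem_coe, mem_ker, mulVecLin_apply] at hE hEt
  simp [hE, hEt]

theorem transpose_inv_mul_transpose_mul_mul_inv [DecidableEq n] {R : Type*} [CommRing R]
    (L P : Matrix n n R) (hP : IsUnit P.det) :
    (P⁻¹)ᵀ * Lᵀ * L * P⁻¹ = (1 + (L - P) * P⁻¹)ᵀ * (1 + (L - P) * P⁻¹) := by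
  have h : L * P⁻¹ = 1 + (L - P) * P⁻¹ := by
    rw [sub_mul, mul_nonsing_inv P hP, add_sub_cancel]
  rw [← h, transpose_mul]
  simp only [Matrix.mul_assoc]

theorem card_sub_two_mul_rank_sub_le_finrank_eigenspace_one [DecidableEq n] (L P : Matrix n n K)
    (hP : IsUnit P.det) :
    Fintype.card n - 2 * (L - P).rank ≤
      finrank K (Module.End.eigenspace (toLin' ((P⁻¹)ᵀ * Lᵀ * L * P⁻¹)) 1) := by
  set E := (L - P) * P⁻¹
  have hE : E.rank ≤ (L - P).rank := rank_mul_le_left _ _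
  calc Fintype.card n - 2 * (L - P).rank ≤ Fintype.card n - E.rank - Eᵀ.rank := by
        rw [rank_transpose]; omega
    _ ≤ finrank K ↥(ker E.mulVecLin ⊓ ker Eᵀ.mulVecLin) :=
        card_sub_rank_sub_rank_le_finrank_ker_inf E Eᵀ
    _ ≤ _ := by
        rw [transpose_inv_mul_transpose_mul_mul_inv L P hP]
        exact Submodule.finrank_mono (ker_inf_ker_transpose_le_eigenspace_one E)

theorem BlockTriangular.det_eq_one {R m α : Type*} [CommRing R] [Fintype m] [DecidableEq m]
    [LinearOrder α] {A : Matrix m m R} {b : m → α} (hA : A.BlockTriangular b)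
    (hdiag : ∀ i j, b i = b j → A i j = (1 : Matrix m m R) i j) :
    A.det = 1 := by
  classical
  rw [← det_one (R := R) (n := m), hA.det, (blockTriangular_one (b := b)).det]
  refine Finset.prod_congr rfl fun a _ => congrArg det ?_
  ext i j
  exact hdiag i j (i.2.trans j.2.symm)

end Matrix

theorem LMmat_det (s N k : ℕ) (M : ℕ → Matrix (Fin s) (Fin s) ℝ) :
    (LMmat s N k M).det = 1 := by
  refine BlockTriangular.det_eq_one (b := fun p => OrderDual.toDual p.1) ?_ ?_
  · intro p q hlt
    have hlt' : (p.1 : ℕ) < q.1 := hlt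
    simp only [LMmat, of_apply]
    rw [if_neg (by intro h; rw [h] at hlt'; omega), if_neg (by omega)]
  · intro p q h
    simp only [OrderDual.toDual_inj] at h
    simp [LMmat, one_apply, h, Prod.ext_iff]

theorem Lmat_sub_LMmat_apply_eq_zero (s N k : ℕ) (M : ℕ → Matrix (Fin s) (Fin s) ℝ)
    (p q : Fin (N + 1) × Fin s) (hq : ¬ ((q.1 : ℕ) < N ∧ k ∣ (q.1 : ℕ) + 1)) :
    (Lmat s N M - LMmat s N k M) p q = 0 := by
  simp only [Matrix.sub_apply, Lmat, LMmat, of_apply]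
  by_cases hdiag : p.1 = q.1
  · simp only [if_pos hdiag, sub_self]
  by_cases hsub : (p.1 : ℕ) = q.1 + 1
  · have hk : ¬ k ∣ (q.1 : ℕ) + 1 := fun hk => hq ⟨by have := p.1.isLt; omega, hk⟩
    simp only [if_neg hdiag, if_pos hsub, if_pos (And.intro hsub hk), sub_self]
  · simp only [if_neg hdiag, if_neg hsub, if_neg (fun h : _ ∧ _ => hsub h.1), sub_self]

theorem Lmat_sub_LMmat_rank_le (s N k : ℕ) (M : ℕ → Matrix (Fin s) (Fin s) ℝ) :
    (Lmat s N M - LMmat s N k M).rank ≤ N / k * s := by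
  classical
  set S : Finset (Fin (N + 1)) := {i | (i : ℕ) < N ∧ k ∣ (i : ℕ) + 1}
  have hS : S.card ≤ N / k := by
    rw [← Nat.card_multiples]
    refine Finset.card_le_card_of_injOn Fin.val (fun i hi => ?_) Fin.val_injective.injOn
    simpa [S] using hi
  have hsupport : Function.support (Lmat s N M - LMmat s N k M)ᵀ.row ⊆
      ↑(S ×ˢ (Finset.univ : Finset (Fin s))) := by
    refine Function.support_subset_iff'.2 fun q hq => funext fun p => ?_
    exact Lmat_sub_LMmat_apply_eq_zero s N k M p q (by simpa [S] using hq)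
  calc (Lmat s N M - LMmat s N k M).rank = (Lmat s N M - LMmat s N k M)ᵀ.rank :=
        (rank_transpose _).symm
    _ ≤ (S ×ˢ Finset.univ).card := rank_le_card_of_support_subset _ _ hsupport
    _ ≤ N / k * s := by
        rw [Finset.card_product, Finset.card_univ, Fintype.card_fin]
        exact Nat.mul_le_mul_right _ hS

theorem LM_unit_eigenvalue_multiplicity_general (s N k : ℕ)
    (M : ℕ → Matrix (Fin s) (Fin s) ℝ) :
    (N + 1 - 2 * (N / k)) * s ≤
      Module.finrank ℝ
        (Module.End.eigenspace
          (Matrix.toLin'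
            (((LMmat s N k M)⁻¹)ᵀ * (Lmat s N M)ᵀ * Lmat s N M * (LMmat s N k M)⁻¹))
          1) := by
  have hcard : Fintype.card (Fin (N + 1) × Fin s) = (N + 1) * s := by simp
  have hLM : IsUnit (LMmat s N k M).det := by rw [LMmat_det]; exact isUnit_one
  calc (N + 1 - 2 * (N / k)) * s = Fintype.card (Fin (N + 1) × Fin s) - 2 * (N / k * s) := by
        rw [hcard, Nat.sub_mul, mul_assoc]
    _ ≤ Fintype.card (Fin (N + 1) × Fin s) - 2 * (Lmat s N M - LMmat s N k M).rank :=
        Nat.sub_le_sub_left (Nat.mul_le_mul_left 2 (Lmat_sub_LMmat_rank_le s N k M)) _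
    _ ≤ _ := card_sub_two_mul_rank_sub_le_finrank_eigenspace_one _ _ hLM

/-- Proposition 4.4: for `2 ≤ k ≤ N+1`, the matrix `L_M⁻ᵀ Lᵀ L L_M⁻¹` has the
eigenvalue `1` with multiplicity at least `r·s`, where `r = N + 1 − 2⌊N/k⌋`;
i.e. its eigenspace for the eigenvalue `1` has dimension at least `r·s`. -/
theorem LM_unit_eigenvalue_multiplicity (s N k : ℕ) (hs : 1 ≤ s) (hN : 1 ≤ N)
    (hk1 : 2 ≤ k) (hk2 : k ≤ N + 1)
    (M : ℕ → Matrix (Fin s) (Fin s) ℝ) :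
    (N + 1 - 2 * (N / k)) * s ≤
      Module.finrank ℝ
        (Module.End.eigenspace
          (Matrix.toLin'
            (((LMmat s N k M)⁻¹)ᵀ * (Lmat s N M)ᵀ * Lmat s N M * (LMmat s N k M)⁻¹))
          1) :=
  LM_unit_eigenvalue_multiplicity_general s N k M
end

section
/- Let s, N ≥ 1 and let k be an integer with 1 ≤ k ≤ N+1. Let M_1, …, M_N ∈ ℝ^{s×s} satisfy ‖M_i M_iᵀ‖₂ ≤ 1 for all i = 1, …, N, where ‖·‖₂ denotes the spectral norm. Let L ∈ ℝ^{(N+1)s×(N+1)s} be the block lower bidiagonal matrix with identity s×s blocks on the diagonal and blocks −M_i (for i = 1, …, N) on the first subdiagonal, and let L_M = L_M(k) be the block matrix whose (i,j)th block equals the identity I if i = j, equals −M_j if i = j+1 and j is not divisible by k, and equals the zero matrix otherwise. Then every eigenvalue of the symmetric matrix L_M⁻ᵀ Lᵀ L L_M⁻¹ is at most k + 1 + 2√k. -/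
open Matrix

/-!
Put `w = L_M⁻¹ v` and number blocks from `0`. The matrices `L` and `L_M` differ only in the
subdiagonal blocks `M_t` with `k ∣ t`, so `L L_M⁻¹ v = v - e`, where the block `e_t` is
`M_t w_{t-1}` if `k ∣ t` and zero otherwise. Each `M_t` is a contraction, since `1 - M_t M_tᵀ` is
positive semidefinite. Inside a run of `k` consecutive blocks, `w` is obtained from `v` by the
recursion `w_t = v_t + M_t w_{t-1}`, so `‖w_{t-1}‖` is at most the sum of the `k` norms `‖v_j‖`
along its run; by Cauchy–Schwarz and disjointness of the runs, `‖e‖² ≤ k ‖v‖²`. Hence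
`‖L L_M⁻¹ v‖ ≤ (1 + √k) ‖v‖`, while an eigenpair `(μ, v)` of `(L L_M⁻¹)ᵀ (L L_M⁻¹)` has
`μ ‖v‖² = ‖L L_M⁻¹ v‖²`.
-/

open Finset

theorem le_sum_Icc_of_le_add_pred {k n : ℕ} {a b : ℕ → ℝ}
    (hdvd : ∀ t < n, k ∣ t → a t ≤ b t)
    (hndvd : ∀ t < n, ¬ k ∣ t → a t ≤ b t + a (t - 1)) :
    ∀ t < n, a t ≤ ∑ j ∈ Icc (k * (t / k)) t, b j := by
  intro t
  induction t with
  | zero => intro h; simpa using hdvd 0 h (dvd_zero k)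
  | succ t ih =>
    intro ht
    by_cases hkt : k ∣ t + 1
    · rw [Nat.mul_div_cancel' hkt, Icc_self, sum_singleton]
      exact hdvd _ ht hkt
    · have hIcc : Icc (k * ((t + 1) / k)) (t + 1) = insert (t + 1) (Icc (k * (t / k)) t) := by
        have := Nat.mul_div_le t k
        rw [Nat.succ_div_of_not_dvd hkt]
        ext j
        simp only [mem_Icc, mem_insert]
        omega
      have hstep := hndvd _ ht hkt
      rw [Nat.add_sub_cancel] at hstep
      rw [hIcc, sum_insert (by simp)]
      linarith [ih (by omega)]

theorem mul_div_add_self_of_dvd_succ {k t : ℕ} (h : k ∣ t + 1) : k * (t / k) + k = t + 1 := by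
  rw [← mul_add_one, ← Nat.succ_div_of_dvd h, Nat.mul_div_cancel' h]

theorem div_eq_of_mem_Icc {k t j : ℕ} (hk : 0 < k) (hj : j ∈ Icc (k * (t / k)) t) :
    j / k = t / k := by
  rw [mem_Icc] at hj
  exact le_antisymm (Nat.div_le_div_right hj.2)
    ((Nat.le_div_iff_mul_le hk).mpr (by linarith [mul_comm k (t / k)]))

theorem sum_filter_dvd_succ_sum_Icc_le {k n : ℕ} {c : ℕ → ℝ} (hc : ∀ j, 0 ≤ c j) :
    ∑ t ∈ range n with k ∣ t + 1, ∑ j ∈ Icc (k * (t / k)) t, c j ≤ ∑ j ∈ range n, c j := by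
  have hdisj : ((range n).filter (k ∣ · + 1) : Set ℕ).PairwiseDisjoint
      fun t => Icc (k * (t / k)) t := by
    intro t ht t' ht' hne
    simp only [coe_filter, Set.mem_ofPred_eq] at ht ht'
    have hk : 0 < k := Nat.pos_of_dvd_of_pos ht.2 t.succ_pos
    refine disjoint_left.mpr fun j hj hj' => hne ?_
    have := div_eq_of_mem_Icc hk hj
    have := div_eq_of_mem_Icc hk hj'
    have := mul_div_add_self_of_dvd_succ ht.2
    have := mul_div_add_self_of_dvd_succ ht'.2
    simp_all
  rw [← sum_biUnion hdisj]
  refine sum_le_sum_of_subset_of_nonneg (fun j hj => ?_) fun j _ _ => hc j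
  simp only [mem_biUnion, mem_filter, mem_range, mem_Icc] at hj ⊢
  omega

theorem sum_sq_le_of_le_add_pred {k n : ℕ} {a b : ℕ → ℝ} (ha : ∀ t, 0 ≤ a t)
    (hdvd : ∀ t < n, k ∣ t → a t ≤ b t)
    (hndvd : ∀ t < n, ¬ k ∣ t → a t ≤ b t + a (t - 1)) :
    ∑ t ∈ range n with k ∣ t + 1, a t ^ 2 ≤ k * ∑ t ∈ range n, b t ^ 2 := by
  calc ∑ t ∈ range n with k ∣ t + 1, a t ^ 2
      ≤ ∑ t ∈ range n with k ∣ t + 1, k * ∑ j ∈ Icc (k * (t / k)) t, b j ^ 2 := by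
        refine sum_le_sum fun t ht => ?_
        simp only [mem_filter, mem_range] at ht
        have hcard : (#(Icc (k * (t / k)) t) : ℝ) ≤ k := by
          have := Nat.mod_add_div t k
          have := Nat.mod_lt t (Nat.pos_of_dvd_of_pos ht.2 t.succ_pos)
          rw [Nat.card_Icc]
          exact_mod_cast (by omega)
        calc a t ^ 2 ≤ (∑ j ∈ Icc (k * (t / k)) t, b j) ^ 2 :=
              pow_le_pow_left₀ (ha t) (le_sum_Icc_of_le_add_pred hdvd hndvd t ht.1) 2
          _ ≤ #(Icc (k * (t / k)) t) * ∑ j ∈ Icc (k * (t / k)) t, b j ^ 2 :=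
              sq_sum_le_card_mul_sum_sq
          _ ≤ k * ∑ j ∈ Icc (k * (t / k)) t, b j ^ 2 :=
              mul_le_mul_of_nonneg_right hcard (sum_nonneg fun j _ => sq_nonneg _)
    _ ≤ k * ∑ t ∈ range n, b t ^ 2 := by
        rw [← mul_sum]
        exact mul_le_mul_of_nonneg_left (sum_filter_dvd_succ_sum_Icc_le fun j => sq_nonneg _)
          (Nat.cast_nonneg k)

section Contraction

theorem EuclideanSpace.norm_toLp_sq {ι : Type*} [Fintype ι] (x : ι → ℝ) :
    ‖WithLp.toLp 2 x‖ ^ 2 = x ⬝ᵥ x := by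
  rw [EuclideanSpace.real_norm_sq_eq]
  simp [dotProduct, sq]

variable {m n : Type*} [Fintype m] [Fintype n] [DecidableEq m] {A : Matrix m n ℝ}

theorem posSemidef_one_sub_mul_transpose
    (hA : ∀ (μ : ℝ) (v : m → ℝ), v ≠ 0 → (A * Aᵀ) *ᵥ v = μ • v → μ ≤ 1) :
    (1 - A * Aᵀ).PosSemidef := by
  have hH : (1 - A * Aᵀ).IsHermitian := isHermitian_one.sub (isHermitian_mul_conjTranspose_self A)
  refine hH.posSemidef_iff_eigenvalues_nonneg.mpr fun j => ?_
  have hv := hH.mulVec_eigenvectorBasis j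
  have hne : ⇑(hH.eigenvectorBasis j) ≠ 0 :=
    (WithLp.ofLp_eq_zero 2).not.mpr (hH.eigenvectorBasis.orthonormal.ne_zero j)
  have := hA (1 - hH.eigenvalues j) _ hne
    (by rw [sub_smul, one_smul, ← hv, sub_mulVec, one_mulVec]; abel)
  exact (by linarith : 0 ≤ hH.eigenvalues j)

theorem norm_transpose_mulVec_le
    (hA : ∀ (μ : ℝ) (v : m → ℝ), v ≠ 0 → (A * Aᵀ) *ᵥ v = μ • v → μ ≤ 1)
    (y : m → ℝ) : ‖WithLp.toLp 2 (Aᵀ *ᵥ y)‖ ≤ ‖WithLp.toLp 2 y‖ := by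
  have h := (posSemidef_one_sub_mul_transpose hA).dotProduct_mulVec_nonneg y
  rw [star_trivial, sub_mulVec, one_mulVec, dotProduct_sub, ← mulVec_mulVec, dotProduct_mulVec,
    ← mulVec_transpose] at h
  refine pow_le_pow_iff_left₀ (norm_nonneg _) (norm_nonneg _) two_ne_zero |>.mp ?_
  rw [EuclideanSpace.norm_toLp_sq, EuclideanSpace.norm_toLp_sq]
  linarith

theorem norm_mulVec_le
    (hA : ∀ (μ : ℝ) (v : m → ℝ), v ≠ 0 → (A * Aᵀ) *ᵥ v = μ • v → μ ≤ 1)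
    (x : n → ℝ) : ‖WithLp.toLp 2 (A *ᵥ x)‖ ≤ ‖WithLp.toLp 2 x‖ := by
  set y := A *ᵥ x
  have h : ‖WithLp.toLp 2 y‖ ^ 2 ≤ ‖WithLp.toLp 2 x‖ * ‖WithLp.toLp 2 y‖ :=
    calc ‖WithLp.toLp 2 y‖ ^ 2 = inner ℝ (WithLp.toLp 2 (Aᵀ *ᵥ y)) (WithLp.toLp 2 x) := by
          rw [EuclideanSpace.norm_toLp_sq, EuclideanSpace.inner_toLp_toLp, star_trivial,
            mulVec_transpose, dotProduct_comm x, ← dotProduct_mulVec]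
      _ ≤ ‖WithLp.toLp 2 (Aᵀ *ᵥ y)‖ * ‖WithLp.toLp 2 x‖ := real_inner_le_norm _ _
      _ ≤ ‖WithLp.toLp 2 y‖ * ‖WithLp.toLp 2 x‖ := by
          gcongr
          exact norm_transpose_mulVec_le hA y
      _ = ‖WithLp.toLp 2 x‖ * ‖WithLp.toLp 2 y‖ := mul_comm _ _
  nlinarith [norm_nonneg (WithLp.toLp 2 x), norm_nonneg (WithLp.toLp 2 y)]

end Contraction

theorem eigenvalue_mul_norm_sq_eq {m n : Type*} [Fintype m] [Fintype n] (Y : Matrix m n ℝ)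
    {μ : ℝ} {v : n → ℝ} (h : (Yᵀ * Y) *ᵥ v = μ • v) :
    μ * ‖WithLp.toLp 2 v‖ ^ 2 = ‖WithLp.toLp 2 (Y *ᵥ v)‖ ^ 2 := by
  rw [EuclideanSpace.norm_toLp_sq, EuclideanSpace.norm_toLp_sq, ← smul_eq_mul, ← dotProduct_smul,
    ← h, ← mulVec_mulVec, dotProduct_mulVec, vecMul_transpose]

section BlockMatrices

variable {s N : ℕ}

def blockSubdiag (s N : ℕ) (P : ℕ → Prop) [DecidablePred P]
    (M : ℕ → Matrix (Fin s) (Fin s) ℝ) : Matrix (Fin (N + 1) × Fin s) (Fin (N + 1) × Fin s) ℝ :=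
  Matrix.of fun p q => if (p.1 : ℕ) = q.1 + 1 ∧ P (q.1 + 1) then M (q.1 + 1) p.2 q.2 else 0

theorem LMmat_eq_one_sub (k : ℕ) (M : ℕ → Matrix (Fin s) (Fin s) ℝ) :
    LMmat s N k M = 1 - blockSubdiag s N (¬ k ∣ ·) M := by
  ext p q
  simp only [LMmat, blockSubdiag, Matrix.sub_apply, one_apply, of_apply, Prod.ext_iff]
  split_ifs <;> simp_all

theorem Lmat_eq_LMmat_sub (k : ℕ) (M : ℕ → Matrix (Fin s) (Fin s) ℝ) :
    Lmat s N M = LMmat s N k M - blockSubdiag s N (k ∣ ·) M := by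
  ext p q
  simp only [Lmat, LMmat, blockSubdiag, Matrix.sub_apply, of_apply]
  split_ifs <;> simp_all

/-- Blocks are numbered from `0`, so the matrix block `(t, t - 1)` is the paper's `(t + 1, t)`;
past the last block, `vecBlock x t` is zero. -/
def vecBlock (x : Fin (N + 1) × Fin s → ℝ) (t : ℕ) : Fin s → ℝ :=
  if h : t < N + 1 then fun a => x (⟨t, h⟩, a) else 0

theorem vecBlock_apply (x : Fin (N + 1) × Fin s → ℝ) (i : Fin (N + 1)) (a : Fin s) :
    vecBlock x i a = x (i, a) := by
  rw [vecBlock, dif_pos i.isLt]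

@[simp]
theorem vecBlock_zero (t : ℕ) : vecBlock (0 : Fin (N + 1) × Fin s → ℝ) t = 0 := by
  unfold vecBlock
  split_ifs <;> rfl

theorem vecBlock_sub (x y : Fin (N + 1) × Fin s → ℝ) (t : ℕ) :
    vecBlock (x - y) t = vecBlock x t - vecBlock y t := by
  unfold vecBlock
  split_ifs
  · rfl
  · rw [sub_zero]

theorem norm_sq_eq_sum_norm_vecBlock_sq (x : Fin (N + 1) × Fin s → ℝ) :
    ‖WithLp.toLp 2 x‖ ^ 2 = ∑ t ∈ range (N + 1), ‖WithLp.toLp 2 (vecBlock x t)‖ ^ 2 := by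
  rw [← Fin.sum_univ_eq_sum_range (fun t => ‖WithLp.toLp 2 (vecBlock x t)‖ ^ 2),
    EuclideanSpace.real_norm_sq_eq, Fintype.sum_prod_type]
  simp [EuclideanSpace.real_norm_sq_eq, vecBlock_apply]

theorem vecBlock_blockSubdiag_mulVec (P : ℕ → Prop) [DecidablePred P]
    (M : ℕ → Matrix (Fin s) (Fin s) ℝ) (w : Fin (N + 1) × Fin s → ℝ) {t : ℕ} (ht : t ≤ N) :
    vecBlock (blockSubdiag s N P M *ᵥ w) t =
      if 0 < t ∧ P t then M t *ᵥ vecBlock w (t - 1) else 0 := by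
  ext a
  rw [vecBlock, dif_pos (Nat.lt_succ_of_le ht)]
  simp only [mulVec, dotProduct, Fintype.sum_prod_type, blockSubdiag, of_apply]
  split_ifs with hP
  · rw [sum_eq_single ⟨t - 1, by omega⟩]
    · rw [vecBlock, dif_pos (by omega)]
      simp [Nat.sub_add_cancel hP.1, hP.2, mulVec, dotProduct]
    · intro j _ hj
      refine sum_eq_zero fun b _ => ?_
      rw [if_neg, zero_mul]
      rintro ⟨h, -⟩
      exact hj (Fin.ext (by simp at h ⊢; omega))
    · simp
  · refine sum_eq_zero fun j _ => sum_eq_zero fun b _ => ?_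
    rw [if_neg, zero_mul]
    rintro ⟨h, hPj⟩
    exact hP ⟨by omega, h ▸ hPj⟩

theorem vecBlock_LMmat_mulVec (k : ℕ) (M : ℕ → Matrix (Fin s) (Fin s) ℝ)
    (w : Fin (N + 1) × Fin s → ℝ) {t : ℕ} (ht : t ≤ N) :
    vecBlock (LMmat s N k M *ᵥ w) t = vecBlock w t -
      if 0 < t ∧ ¬ k ∣ t then M t *ᵥ vecBlock w (t - 1) else 0 := by
  rw [LMmat_eq_one_sub, sub_mulVec, one_mulVec, vecBlock_sub,
    vecBlock_blockSubdiag_mulVec _ _ _ ht]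

theorem isUnit_LMmat (k : ℕ) (M : ℕ → Matrix (Fin s) (Fin s) ℝ) : IsUnit (LMmat s N k M) := by
  refine mulVec_injective_iff_isUnit.mp <|
    (injective_iff_map_eq_zero (mulVecLin (LMmat s N k M))).mpr fun w hw => ?_
  rw [mulVecLin_apply] at hw
  have hblock : ∀ t ≤ N, vecBlock w t = 0 := by
    intro t ht
    induction t with
    | zero => simpa [hw] using (vecBlock_LMmat_mulVec k M w ht).symm
    | succ t ih => simpa [hw, ih (by omega)] using (vecBlock_LMmat_mulVec k M w ht).symm
  ext ⟨i, a⟩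
  rw [← vecBlock_apply w, hblock i (Nat.lt_succ_iff.mp i.isLt)]
  rfl

end BlockMatrices

section ErrorBound

variable {s N k : ℕ} {M : ℕ → Matrix (Fin s) (Fin s) ℝ}

theorem norm_vecBlock_le_of_dvd (w : Fin (N + 1) × Fin s → ℝ) {t : ℕ} (ht : t ≤ N)
    (hkt : k ∣ t) :
    ‖WithLp.toLp 2 (vecBlock w t)‖ ≤ ‖WithLp.toLp 2 (vecBlock (LMmat s N k M *ᵥ w) t)‖ := by
  simp [vecBlock_LMmat_mulVec k M w ht, hkt]

theorem norm_vecBlock_le_add_pred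
    (hM : ∀ t, 0 < t → t ≤ N → ∀ x, ‖WithLp.toLp 2 (M t *ᵥ x)‖ ≤ ‖WithLp.toLp 2 x‖)
    (w : Fin (N + 1) × Fin s → ℝ) {t : ℕ} (ht : t ≤ N) (hkt : ¬ k ∣ t) :
    ‖WithLp.toLp 2 (vecBlock w t)‖ ≤
      ‖WithLp.toLp 2 (vecBlock (LMmat s N k M *ᵥ w) t)‖ +
        ‖WithLp.toLp 2 (vecBlock w (t - 1))‖ := by
  have ht0 : 0 < t := Nat.pos_of_ne_zero (by rintro rfl; exact hkt (dvd_zero k))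
  have hw : vecBlock w t = vecBlock (LMmat s N k M *ᵥ w) t + M t *ᵥ vecBlock w (t - 1) := by
    rw [vecBlock_LMmat_mulVec k M w ht, if_pos ⟨ht0, hkt⟩, sub_add_cancel]
  rw [hw, WithLp.toLp_add]
  calc _ ≤ _ := norm_add_le _ _
    _ ≤ _ := by gcongr; exact hM t ht0 ht _

theorem norm_sq_blockSubdiag_dvd_mulVec_le
    (hM : ∀ t, 0 < t → t ≤ N → ∀ x, ‖WithLp.toLp 2 (M t *ᵥ x)‖ ≤ ‖WithLp.toLp 2 x‖)
    (w : Fin (N + 1) × Fin s → ℝ) :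
    ‖WithLp.toLp 2 (blockSubdiag s N (k ∣ ·) M *ᵥ w)‖ ^ 2 ≤
      k * ‖WithLp.toLp 2 (LMmat s N k M *ᵥ w)‖ ^ 2 := by
  set a : ℕ → ℝ := fun t => ‖WithLp.toLp 2 (vecBlock w t)‖
  set b : ℕ → ℝ := fun t => ‖WithLp.toLp 2 (vecBlock (LMmat s N k M *ᵥ w) t)‖
  have he : ∀ t < N, ‖WithLp.toLp 2 (vecBlock (blockSubdiag s N (k ∣ ·) M *ᵥ w) (t + 1))‖ ^ 2 ≤
      if k ∣ t + 1 then a t ^ 2 else 0 := by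
    intro t ht
    rw [vecBlock_blockSubdiag_mulVec _ _ _ ht]
    split_ifs with h1 h2
    · exact pow_le_pow_left₀ (norm_nonneg _) (hM _ h1.1 ht _) 2
    · exact absurd h1.2 h2
    · simpa using sq_nonneg (a t)
    · simp
  calc _ = ∑ t ∈ range N,
        ‖WithLp.toLp 2 (vecBlock (blockSubdiag s N (k ∣ ·) M *ᵥ w) (t + 1))‖ ^ 2 := by
        rw [norm_sq_eq_sum_norm_vecBlock_sq, sum_range_succ',
          vecBlock_blockSubdiag_mulVec _ _ _ (Nat.zero_le N)]
        simp
    _ ≤ ∑ t ∈ range N, if k ∣ t + 1 then a t ^ 2 else 0 :=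
        sum_le_sum fun t ht => he t (mem_range.mp ht)
    _ = ∑ t ∈ range N with k ∣ t + 1, a t ^ 2 := (sum_filter _ _).symm
    _ ≤ k * ∑ t ∈ range N, b t ^ 2 :=
        sum_sq_le_of_le_add_pred (fun t => norm_nonneg _)
          (fun t ht => norm_vecBlock_le_of_dvd w ht.le)
          (fun t ht => norm_vecBlock_le_add_pred hM w ht.le)
    _ ≤ k * ∑ t ∈ range (N + 1), b t ^ 2 := by
        rw [sum_range_succ]
        gcongr
        exact le_add_of_nonneg_right (sq_nonneg _)
    _ = k * ‖WithLp.toLp 2 (LMmat s N k M *ᵥ w)‖ ^ 2 := by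
        rw [norm_sq_eq_sum_norm_vecBlock_sq]

theorem norm_blockSubdiag_dvd_mulVec_le
    (hM : ∀ t, 0 < t → t ≤ N → ∀ x, ‖WithLp.toLp 2 (M t *ᵥ x)‖ ≤ ‖WithLp.toLp 2 x‖)
    (w : Fin (N + 1) × Fin s → ℝ) :
    ‖WithLp.toLp 2 (blockSubdiag s N (k ∣ ·) M *ᵥ w)‖ ≤
      √k * ‖WithLp.toLp 2 (LMmat s N k M *ᵥ w)‖ := by
  rw [← Real.sqrt_sq (norm_nonneg (WithLp.toLp 2 (blockSubdiag s N (k ∣ ·) M *ᵥ w))),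
    ← Real.sqrt_sq (norm_nonneg (WithLp.toLp 2 (LMmat s N k M *ᵥ w))),
    ← Real.sqrt_mul (Nat.cast_nonneg k)]
  exact Real.sqrt_le_sqrt (norm_sq_blockSubdiag_dvd_mulVec_le hM w)

end ErrorBound

theorem LM_eigenvalue_upper_bound_general (s N k : ℕ)
    (M : ℕ → Matrix (Fin s) (Fin s) ℝ)
    (hM : ∀ i, 1 ≤ i → i ≤ N → ∀ (μ : ℝ) (v : Fin s → ℝ), v ≠ 0 →
      (M i * (M i)ᵀ) *ᵥ v = μ • v → μ ≤ 1) :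
    ∀ (μ : ℝ) (v : Fin (N + 1) × Fin s → ℝ), v ≠ 0 →
      (((LMmat s N k M)⁻¹)ᵀ * (Lmat s N M)ᵀ * Lmat s N M * (LMmat s N k M)⁻¹) *ᵥ v
        = μ • v →
      μ ≤ (k : ℝ) + 1 + 2 * Real.sqrt k := by
  intro μ v hv hμv
  set X := LMmat s N k M
  have hX : X * X⁻¹ = 1 := mul_nonsing_inv X ((isUnit_iff_isUnit_det X).mp (isUnit_LMmat k M))
  set w := X⁻¹ *ᵥ v
  have hXw : X *ᵥ w = v := by rw [mulVec_mulVec, hX, one_mulVec]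
  set e := blockSubdiag s N (k ∣ ·) M *ᵥ w
  have hLX : (Lmat s N M * X⁻¹) *ᵥ v = v - e := by
    rw [Lmat_eq_LMmat_sub k, sub_mul, hX, sub_mulVec, one_mulVec, ← mulVec_mulVec]
  have hquad : μ * ‖WithLp.toLp 2 v‖ ^ 2 = ‖WithLp.toLp 2 (v - e)‖ ^ 2 := by
    rw [← hLX]
    refine eigenvalue_mul_norm_sq_eq _ ?_
    rwa [transpose_mul, ← mul_assoc]
  have he : ‖WithLp.toLp 2 e‖ ≤ √k * ‖WithLp.toLp 2 v‖ :=
    hXw ▸ norm_blockSubdiag_dvd_mulVec_le (fun t ht ht' => norm_mulVec_le (hM t ht ht')) w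
  have hve : ‖WithLp.toLp 2 (v - e)‖ ≤ (1 + √k) * ‖WithLp.toLp 2 v‖ := by
    rw [WithLp.toLp_sub]
    linarith [norm_sub_le (WithLp.toLp 2 v) (WithLp.toLp 2 e)]
  have hv : 0 < ‖WithLp.toLp 2 v‖ := norm_pos_iff.mpr ((WithLp.toLp_eq_zero 2).not.mpr hv)
  refine le_of_mul_le_mul_right ?_ (pow_pos hv 2)
  calc μ * ‖WithLp.toLp 2 v‖ ^ 2 ≤ ((1 + √k) * ‖WithLp.toLp 2 v‖) ^ 2 := by
        rw [hquad]
        gcongr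
    _ = (k + 1 + 2 * √k) * ‖WithLp.toLp 2 v‖ ^ 2 := by
        rw [mul_pow, add_sq, Real.sq_sqrt (Nat.cast_nonneg k)]
        ring

/-- Proposition 4.5: if `‖M_i M_iᵀ‖₂ ≤ 1` for all `i` (expressed here, since each
`M_i M_iᵀ` is symmetric positive semidefinite, as: every eigenvalue of `M_i M_iᵀ`
is at most `1`), then every eigenvalue of `L_M⁻ᵀ Lᵀ L L_M⁻¹` is at most
`k + 1 + 2√k`. -/
theorem LM_eigenvalue_upper_bound (s N k : ℕ) (hs : 1 ≤ s) (hN : 1 ≤ N)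
    (hk1 : 1 ≤ k) (hk2 : k ≤ N + 1)
    (M : ℕ → Matrix (Fin s) (Fin s) ℝ)
    (hM : ∀ i, 1 ≤ i → i ≤ N → ∀ (μ : ℝ) (v : Fin s → ℝ), v ≠ 0 →
      (M i * (M i)ᵀ) *ᵥ v = μ • v → μ ≤ 1) :
    ∀ (μ : ℝ) (v : Fin (N + 1) × Fin s → ℝ), v ≠ 0 →
      (((LMmat s N k M)⁻¹)ᵀ * (Lmat s N M)ᵀ * Lmat s N M * (LMmat s N k M)⁻¹) *ᵥ v
        = μ • v →
      μ ≤ (k : ℝ) + 1 + 2 * Real.sqrt k :=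
  LM_eigenvalue_upper_bound_general s N k M hM
end
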